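/- arXiv:math/9804150 — 5 statements merged into one kernel-verified Lean document; each statement's English description precedes it below -/
import Mathlib

section
/- Let J be a symmetric nonnegative measure on E × E vanishing on the diagonal, π a probability measure on E, and define D(f,f) = (1/2)∬ (f(x) − f(y))² J(dx,dy). Then λ₁ := inf{D(f,f) : π(f)=0, π(f²)=1} satisfies λ₁ ≥ inf_{B : π(B) ≤ 1/2} λ₀(B), where λ₀(B) := inf{D(f,f) : π(f²)=1, f = 0 on Bᶜ}. -/
/-!
Center `f` at a median `c`. The positive and negative parts of `f - c` live on `{f > c}` and
`{f < c}`, both of `π`-measure at most `1/2`, so the energy of each part is at least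
`inf_B λ₀(B)` times its `L²`-mass. A pointwise inequality gives
`D(f) ≥ D((f - c)⁺) + D((f - c)⁻)`, while the two masses add up to
`π((f - c)²) = 1 + c² ≥ 1`.
-/

open MeasureTheory Set ENNReal Filter

section PosPart

variable {α : Type*} [CommRing α] [LinearOrder α] [IsStrictOrderedRing α]

theorem sq_posPart_add_sq_negPart (a : α) : a⁺ ^ 2 + a⁻ ^ 2 = a ^ 2 := by
  rcases le_total 0 a with ha | ha
  · simp [posPart_eq_self.2 ha, negPart_eq_zero.2 ha]
  · simp [posPart_eq_zero.2 ha, negPart_eq_neg.2 ha]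

theorem sq_posPart_sub_add_sq_negPart_sub_le (a b : α) :
    (a⁺ - b⁺) ^ 2 + (a⁻ - b⁻) ^ 2 ≤ (a - b) ^ 2 := by
  rcases le_total 0 a with ha | ha <;> rcases le_total 0 b with hb | hb <;>
    simp only [posPart_eq_self.2, negPart_eq_zero.2, posPart_eq_zero.2, negPart_eq_neg.2, ha,
      hb] <;>
    nlinarith

end PosPart

theorem exists_measure_Iio_le_half_and_measure_Ioi_le_half (μ : Measure ℝ)
    [IsProbabilityMeasure μ] : ∃ c, μ (Iio c) ≤ 1 / 2 ∧ μ (Ioi c) ≤ 1 / 2 := by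
  set F := ProbabilityTheory.cdf μ
  set S := {t | 1 / 2 ≤ F t}
  have hS : S.Nonempty :=
    ((ProbabilityTheory.tendsto_cdf_atTop μ).eventually (eventually_ge_nhds (by norm_num))).exists
  have hS_bdd : BddBelow S := by
    obtain ⟨b, hb⟩ := ((ProbabilityTheory.tendsto_cdf_atBot μ).eventually
      (eventually_lt_nhds (by norm_num : (0 : ℝ) < 1 / 2))).exists_forall_of_atBot
    exact ⟨b, fun t ht => not_lt.1 fun htb => (hb t htb.le).not_ge ht⟩
  -- the lower median: right continuity of `F` gives `F c ≥ 1/2`, and `F < 1/2` left of `c`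
  set c := sInf S
  have hF_lt : ∀ t < c, F t < 1 / 2 := fun t ht => not_le.1 fun h => (csInf_le hS_bdd h).not_gt ht
  have hF_ge : 1 / 2 ≤ F c := by
    refine ge_of_tendsto ((F.right_continuous c).mono Ioi_subset_Ici_self).tendsto
      (eventually_nhdsWithin_of_forall fun t ht => ?_)
    obtain ⟨s, hs, hst⟩ := exists_lt_of_csInf_lt hS ht
    exact hs.trans (F.mono hst.le)
  refine ⟨c, ?_, ?_⟩
  · calc μ (Iio c) = F.measure (Iio c) := by rw [ProbabilityTheory.measure_cdf]
      _ = ENNReal.ofReal (Function.leftLim F c) := by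
        rw [F.measure_Iio (ProbabilityTheory.tendsto_cdf_atBot μ), sub_zero]
      _ ≤ ENNReal.ofReal (1 / 2) := ENNReal.ofReal_le_ofReal <| le_of_tendsto
        (F.mono.tendsto_leftLim c) (eventually_nhdsWithin_of_forall fun t ht => (hF_lt t ht).le)
      _ = 1 / 2 := by simp
  · calc μ (Ioi c) = F.measure (Ioi c) := by rw [ProbabilityTheory.measure_cdf]
      _ = ENNReal.ofReal (1 - F c) := F.measure_Ioi (ProbabilityTheory.tendsto_cdf_atTop μ) c
      _ ≤ ENNReal.ofReal (1 / 2) := ENNReal.ofReal_le_ofReal (by linarith)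
      _ = 1 / 2 := by simp

section Integral

variable {α : Type*} [MeasurableSpace α]

theorem exists_measure_preimage_Iio_le_half_and_Ioi_le_half (μ : Measure α)
    [IsProbabilityMeasure μ] {f : α → ℝ} (hf : AEMeasurable f μ) :
    ∃ c, μ (f ⁻¹' Iio c) ≤ 1 / 2 ∧ μ (f ⁻¹' Ioi c) ≤ 1 / 2 := by
  have := Measure.isProbabilityMeasure_map hf
  obtain ⟨c, hc⟩ := exists_measure_Iio_le_half_and_measure_Ioi_le_half (μ.map f)
  rw [Measure.map_apply_of_aemeasurable hf measurableSet_Iio,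
    Measure.map_apply_of_aemeasurable hf measurableSet_Ioi] at hc
  exact ⟨c, hc⟩

theorem integral_sub_const_sq {μ : Measure α} [IsProbabilityMeasure μ] {f : α → ℝ}
    (hf : MemLp f 2 μ) (c : ℝ) :
    ∫ x, (f x - c) ^ 2 ∂μ = ∫ x, f x ^ 2 ∂μ - 2 * c * ∫ x, f x ∂μ + c ^ 2 := by
  have hf_int : Integrable (fun x => 2 * c * f x) μ := (hf.integrable one_le_two).const_mul _
  calc ∫ x, (f x - c) ^ 2 ∂μ = ∫ x, (f x ^ 2 - 2 * c * f x + c ^ 2) ∂μ := by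
        congr 1 with x; ring
    _ = _ := by
        have hsq_int : Integrable (fun x => f x ^ 2 - 2 * c * f x) μ :=
          hf.integrable_sq.sub hf_int
        rw [integral_add hsq_int (integrable_const _), integral_sub hf.integrable_sq hf_int,
          integral_const_mul, integral_const]
        simp

theorem integral_sq_posPart_add_integral_sq_negPart {μ : Measure α} {f : α → ℝ}
    (hf : MemLp f 2 μ) :
    ∫ x, (f x)⁺ ^ 2 ∂μ + ∫ x, (f x)⁻ ^ 2 ∂μ = ∫ x, f x ^ 2 ∂μ := by
  have hpos : Integrable (fun x => (f x)⁺ ^ 2) μ := hf.pos_part.integrable_sq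
  have hneg : Integrable (fun x => (f x)⁻ ^ 2) μ := hf.neg_part.integrable_sq
  rw [← integral_add hpos hneg]
  simp only [sq_posPart_add_sq_negPart]

end Integral

section Dirichlet

variable {E : Type*} [MeasurableSpace E]

noncomputable def dirichletForm (J : Measure (E × E)) (f : E → ℝ) : ℝ≥0∞ :=
  (1 / 2 : ℝ≥0∞) * ∫⁻ p, ENNReal.ofReal ((f p.1 - f p.2) ^ 2) ∂J

noncomputable def dirichletEigenvalue (π : Measure E) (J : Measure (E × E)) (B : Set E) :
    ℝ≥0∞ :=
  sInf {r | ∃ f : E → ℝ, Measurable f ∧ (∀ x ∈ Bᶜ, f x = 0) ∧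
    (∫ x, (f x) ^ 2 ∂π) = 1 ∧ r = dirichletForm J f}

variable (J : Measure (E × E))

theorem dirichletForm_sub_const (f : E → ℝ) (c : ℝ) :
    dirichletForm J (fun x => f x - c) = dirichletForm J f := by
  simp only [dirichletForm, sub_sub_sub_cancel_right]

theorem dirichletForm_const_mul (t : ℝ) (f : E → ℝ) :
    dirichletForm J (fun x => t * f x) = ENNReal.ofReal (t ^ 2) * dirichletForm J f := by
  simp only [dirichletForm, ← mul_sub, mul_pow, ENNReal.ofReal_mul (sq_nonneg t)]
  rw [lintegral_const_mul' _ _ ENNReal.ofReal_ne_top, mul_left_comm]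

theorem dirichletForm_posPart_add_dirichletForm_negPart_le (f : E → ℝ) :
    dirichletForm J (fun x => (f x)⁺) + dirichletForm J (fun x => (f x)⁻) ≤
      dirichletForm J f := by
  simp only [dirichletForm, ← mul_add]
  gcongr
  refine (le_lintegral_add _ _).trans (lintegral_mono fun p => ?_)
  rw [← ENNReal.ofReal_add (sq_nonneg _) (sq_nonneg _)]
  exact ENNReal.ofReal_le_ofReal (sq_posPart_sub_add_sq_negPart_sub_le _ _)

theorem dirichletEigenvalue_mul_le {π : Measure E} {B : Set E} {u : E → ℝ} (hu : Measurable u)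
    (hB : ∀ x ∈ Bᶜ, u x = 0) :
    dirichletEigenvalue π J B * ENNReal.ofReal (∫ x, u x ^ 2 ∂π) ≤ dirichletForm J u := by
  set a := ∫ x, u x ^ 2 ∂π
  rcases le_or_gt a 0 with ha | ha
  · simp [ENNReal.ofReal_of_nonpos ha]
  set f : E → ℝ := fun x => u x / √a
  have hu_eq : u = fun x => √a * f x :=
    funext fun x => (mul_div_cancel₀ _ (Real.sqrt_pos.2 ha).ne').symm
  have hf : ∫ x, f x ^ 2 ∂π = 1 := by
    simp only [f, div_pow, Real.sq_sqrt ha.le]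
    rw [integral_div, div_self ha.ne']
  have hle : dirichletEigenvalue π J B ≤ dirichletForm J f :=
    sInf_le ⟨f, hu.div_const _, fun x hx => by simp [f, hB x hx], hf, rfl⟩
  calc dirichletEigenvalue π J B * ENNReal.ofReal a ≤ dirichletForm J f * ENNReal.ofReal a := by
        gcongr
    _ = dirichletForm J u := by
        rw [hu_eq, dirichletForm_const_mul, Real.sq_sqrt ha.le, mul_comm]

theorem iInf_dirichletEigenvalue_mul_le {π : Measure E} {S : Set (Set E)} {B : Set E}
    {u : E → ℝ} (hu : Measurable u) (hB : ∀ x ∈ Bᶜ, u x = 0) (hBS : B ∈ S) :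
    (⨅ B ∈ S, dirichletEigenvalue π J B) * ENNReal.ofReal (∫ x, u x ^ 2 ∂π) ≤
      dirichletForm J u :=
  (mul_le_mul_left (iInf₂_le B hBS) _).trans (dirichletEigenvalue_mul_le J hu hB)

end Dirichlet

theorem stmt4_general {E : Type*} [MeasurableSpace E] (π : Measure E) [IsProbabilityMeasure π]
    (J : Measure (E × E))
    (D : (E → ℝ) → ℝ≥0∞)
    (hD : ∀ f, D f = (1 / 2 : ℝ≥0∞) * ∫⁻ p, ENNReal.ofReal ((f p.1 - f p.2) ^ 2) ∂J)
    (lam1 : ℝ≥0∞)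
    (hlam1 : lam1 = sInf {r | ∃ f : E → ℝ, Measurable f ∧ (∫ x, f x ∂π) = 0 ∧
        (∫ x, (f x) ^ 2 ∂π) = 1 ∧ r = D f})
    (lam0 : Set E → ℝ≥0∞)
    (hlam0 : ∀ B, lam0 B = sInf {r | ∃ f : E → ℝ, Measurable f ∧
        (∀ x ∈ Bᶜ, f x = 0) ∧ (∫ x, (f x) ^ 2 ∂π) = 1 ∧ r = D f}) :
    lam1 ≥ ⨅ B ∈ {B : Set E | MeasurableSet B ∧ π B ≤ 1 / 2}, lam0 B := by
  obtain rfl : D = dirichletForm J := funext hD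
  obtain rfl : lam0 = dirichletEigenvalue π J := funext hlam0
  subst hlam1
  refine le_sInf ?_
  rintro _ ⟨f, hf, hf_mean, hf_sq, rfl⟩
  obtain ⟨c, hc_lt, hc_gt⟩ :=
    exists_measure_preimage_Iio_le_half_and_Ioi_le_half π hf.aemeasurable
  set m := ⨅ B ∈ {B : Set E | MeasurableSet B ∧ π B ≤ 1 / 2}, dirichletEigenvalue π J B
  set a := ENNReal.ofReal (∫ x, (f x - c)⁺ ^ 2 ∂π)
  set b := ENNReal.ofReal (∫ x, (f x - c)⁻ ^ 2 ∂π)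
  have hpos : m * a ≤ dirichletForm J (fun x => (f x - c)⁺) :=
    iInf_dirichletEigenvalue_mul_le J (by fun_prop)
      (fun x hx => posPart_eq_zero.2 (sub_nonpos.2 (not_lt.1 hx))) ⟨hf measurableSet_Ioi, hc_gt⟩
  have hneg : m * b ≤ dirichletForm J (fun x => (f x - c)⁻) :=
    iInf_dirichletEigenvalue_mul_le J (by fun_prop)
      (fun x hx => negPart_eq_zero.2 (sub_nonneg.2 (not_lt.1 hx))) ⟨hf measurableSet_Iio, hc_lt⟩
  have hf2 : MemLp f 2 π := (memLp_two_iff_integrable_sq hf.aestronglyMeasurable).2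
    (.of_integral_ne_zero (by simp [hf_sq]))
  have hmass : 1 ≤ a + b := by
    rw [← ENNReal.ofReal_add (integral_nonneg fun _ => sq_nonneg _)
      (integral_nonneg fun _ => sq_nonneg _),
      integral_sq_posPart_add_integral_sq_negPart (f := fun x => f x - c)
        (hf2.sub (memLp_const c)),
      integral_sub_const_sq hf2, hf_mean, hf_sq]
    exact ENNReal.one_le_ofReal.2 (by nlinarith [sq_nonneg c])
  calc m ≤ m * a + m * b := by rw [← mul_add]; exact le_mul_of_one_le_right' hmass
    _ ≤ dirichletForm J (fun x => (f x - c)⁺) + dirichletForm J (fun x => (f x - c)⁻) :=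
      add_le_add hpos hneg
    _ ≤ dirichletForm J (fun x => f x - c) :=
      dirichletForm_posPart_add_dirichletForm_negPart_le J _
    _ = dirichletForm J f := dirichletForm_sub_const J f c

/-- The spectral gap `λ₁` is bounded below by the infimum over sets `B` with
`π(B) ≤ 1/2` of the first Dirichlet eigenvalue `λ₀(B)`. -/
theorem stmt4 {E : Type*} [MeasurableSpace E] (π : Measure E) [IsProbabilityMeasure π]
    (J : Measure (E × E)) (hsym : Measure.map Prod.swap J = J)
    (hdiag : J {p : E × E | p.1 = p.2} = 0)
    (D : (E → ℝ) → ℝ≥0∞)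
    (hD : ∀ f, D f = (1 / 2 : ℝ≥0∞) * ∫⁻ p, ENNReal.ofReal ((f p.1 - f p.2) ^ 2) ∂J)
    (lam1 : ℝ≥0∞)
    (hlam1 : lam1 = sInf {r | ∃ f : E → ℝ, Measurable f ∧ (∫ x, f x ∂π) = 0 ∧
        (∫ x, (f x) ^ 2 ∂π) = 1 ∧ r = D f})
    (lam0 : Set E → ℝ≥0∞)
    (hlam0 : ∀ B, lam0 B = sInf {r | ∃ f : E → ℝ, Measurable f ∧
        (∀ x ∈ Bᶜ, f x = 0) ∧ (∫ x, (f x) ^ 2 ∂π) = 1 ∧ r = D f}) :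
    lam1 ≥ ⨅ B ∈ {B : Set E | MeasurableSet B ∧ π B ≤ 1 / 2}, lam0 B :=
  stmt4_general π J D hD lam1 hlam1 lam0 hlam0
end

section
/- Coarea formula for symmetric forms: Let J be a symmetric nonnegative measure on E × E and K a nonnegative measure on E, and let f ≥ 0 be measurable with π(f) = 1. Setting A_γ = {f > γ}, one has (1/2)∬ J(dx,dy)|f(y) − f(x)| + ∫ f dK = ∫₀^∞ [J(A_γ × A_γᶜ) + K(A_γ)] dγ. Consequently, (1/2)∬ J(dx,dy)|f(y) − f(x)| + K(f) ≥ h, where h = inf_{π(A)>0} [J(A × Aᶜ) + K(A)]/π(A). -/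
/-! By the symmetry of `J`, `(1/2)∬ |f y - f x| dJ = ∬ (f x - f y)⁺ dJ`, and `(f x - f y)⁺` is
the length of the set of levels `γ` with `(x, y) ∈ A_γ × A_γᶜ`; likewise `f x` is the length of
the set of `γ > 0` with `x ∈ A_γ`. Both identities therefore follow by exchanging the order of
integration. Tonelli needs σ-finiteness, which `J` need not have: if `J` gives finite mass to
every set `{f y < q, r < f x}` with rationals `q < r`, then it is σ-finite on `{f y < f x}`;
otherwise one such set has infinite mass, and both sides are infinite because it lies in
`A_γ × A_γᶜ` for all `γ ∈ (q, r)`. The Cheeger bound follows by integrating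
`h π(A_γ) ≤ J(A_γ × A_γᶜ) + K(A_γ)` over `γ`, since `∫₀^∞ π(A_γ) dγ = π(f) = 1`. -/

open MeasureTheory Set ENNReal

lemma measurable_measure_setOf_lt {Ω : Type*} [MeasurableSpace Ω] (μ : Measure Ω) (v : Ω → ℝ) :
    Measurable fun γ : ℝ => μ {p | γ < v p} :=
  Antitone.measurable fun _ _ hab => measure_mono fun _ hp => hab.trans_lt hp

section Coarea

variable {Ω : Type*} [MeasurableSpace Ω] {μ : Measure Ω} {u v : Ω → ℝ}

lemma lintegral_measure_le_lt_eq_lintegral_ofReal_sub_of_sFinite [SFinite μ]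
    (hu : Measurable u) (hv : Measurable v) (hu0 : ∀ p, 0 ≤ u p) :
    ∫⁻ γ in Ioi 0, μ {p | u p ≤ γ ∧ γ < v p} = ∫⁻ p, ENNReal.ofReal (v p - u p) ∂μ := by
  have hS : MeasurableSet {q : Ω × ℝ | u q.1 ≤ q.2 ∧ q.2 < v q.1} :=
    (measurableSet_le (hu.comp measurable_fst) measurable_snd).inter
      (measurableSet_lt measurable_snd (hv.comp measurable_fst))
  calc ∫⁻ γ in Ioi 0, μ {p | u p ≤ γ ∧ γ < v p}
      = μ.prod (volume.restrict (Ioi 0)) {q : Ω × ℝ | u q.1 ≤ q.2 ∧ q.2 < v q.1} :=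
        (Measure.prod_apply_symm hS).symm
    _ = ∫⁻ p, volume.restrict (Ioi 0) (Ico (u p) (v p)) ∂μ := Measure.prod_apply hS
    _ = ∫⁻ p, ENNReal.ofReal (v p - u p) ∂μ := by
        refine lintegral_congr fun p => ?_
        rw [restrict_Ioi_eq_restrict_Ici, Measure.restrict_apply measurableSet_Ico,
          inter_eq_left.2 (Ico_subset_Ici_self.trans (Ici_subset_Ici.2 (hu0 p))),
          Real.volume_Ico]

lemma sigmaFinite_restrict_setOf_lt (hu : Measurable u) (hv : Measurable v)
    (hfin : ∀ q r : ℚ, q < r → μ {p | u p < q ∧ r < v p} < ∞) :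
    SigmaFinite (μ.restrict {p | u p < v p}) := by
  set D := {p | u p < v p}
  refine Measure.sigmaFinite_of_countable (S := insert Dᶜ
    {B | ∃ q r : ℚ, q < r ∧ B = {p | u p < q ∧ r < v p}}) ?_ ?_ ?_
  · refine ((countable_range fun qr : ℚ × ℚ => {p | u p < qr.1 ∧ qr.2 < v p}).mono ?_).insert _
    rintro _ ⟨q, r, -, rfl⟩
    exact ⟨(q, r), rfl⟩
  · rintro B (rfl | ⟨q, r, hqr, rfl⟩)
    · rw [Measure.restrict_apply' (measurableSet_lt hu hv), compl_inter_self, measure_empty]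
      exact zero_lt_top
    · exact (Measure.restrict_apply_le _ _).trans_lt (hfin q r hqr)
  · refine eq_univ_of_forall fun p => ?_
    by_cases hp : p ∈ D
    · obtain ⟨q, huq, hqv⟩ := exists_rat_btwn (show u p < v p from hp)
      obtain ⟨r, hqr, hrv⟩ := exists_rat_btwn hqv
      exact ⟨_, Or.inr ⟨q, r, by exact_mod_cast hqr, rfl⟩, huq, hrv⟩
    · exact ⟨Dᶜ, Or.inl rfl, hp⟩

lemma lintegral_measure_le_lt_eq_top (hu : Measurable u) (hv : Measurable v)
    (hu0 : ∀ p, 0 ≤ u p) {q r : ℝ} (hqr : q < r) (hB : μ {p | u p < q ∧ r < v p} = ∞) :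
    ∫⁻ γ in Ioi 0, μ {p | u p ≤ γ ∧ γ < v p} = ∞ ∧
      ∫⁻ p, ENNReal.ofReal (v p - u p) ∂μ = ∞ := by
  set B := {p | u p < q ∧ r < v p}
  obtain ⟨p₀, hp₀⟩ := nonempty_of_measure_ne_zero (hB.trans_ne top_ne_zero)
  have hq : 0 ≤ q := (hu0 p₀).trans hp₀.1.le
  have hlen : ENNReal.ofReal (r - q) ≠ 0 := by simpa using hqr
  constructor
  · refine top_le_iff.1 ?_
    calc ∞ = ∫⁻ _ in Ioo q r, μ B := by
          rw [setLIntegral_const, hB, Real.volume_Ioo, top_mul hlen]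
      _ ≤ ∫⁻ γ in Ioo q r, μ {p | u p ≤ γ ∧ γ < v p} :=
          setLIntegral_mono' measurableSet_Ioo fun γ hγ => measure_mono fun p hp =>
            ⟨(hp.1.trans hγ.1).le, hγ.2.trans hp.2⟩
      _ ≤ ∫⁻ γ in Ioi 0, μ {p | u p ≤ γ ∧ γ < v p} :=
          lintegral_mono_set (Ioo_subset_Ioi_self.trans (Ioi_subset_Ioi hq))
  · refine top_le_iff.1 ?_
    calc ∞ = ∫⁻ _ in B, ENNReal.ofReal (r - q) ∂μ := by
          rw [setLIntegral_const, hB, mul_top hlen]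
      _ ≤ ∫⁻ p in B, ENNReal.ofReal (v p - u p) ∂μ :=
          setLIntegral_mono' ((measurableSet_lt hu measurable_const).inter
            (measurableSet_lt measurable_const hv)) fun p hp =>
            ENNReal.ofReal_le_ofReal (by linarith [hp.1, hp.2])
      _ ≤ ∫⁻ p, ENNReal.ofReal (v p - u p) ∂μ := setLIntegral_le_lintegral _ _

theorem lintegral_measure_le_lt_eq_lintegral_ofReal_sub (hu : Measurable u) (hv : Measurable v)
    (hu0 : ∀ p, 0 ≤ u p) :
    ∫⁻ γ in Ioi 0, μ {p | u p ≤ γ ∧ γ < v p} = ∫⁻ p, ENNReal.ofReal (v p - u p) ∂μ := by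
  by_cases hfin : ∀ q r : ℚ, q < r → μ {p | u p < q ∧ r < v p} < ∞
  · have := sigmaFinite_restrict_setOf_lt hu hv hfin
    calc ∫⁻ γ in Ioi 0, μ {p | u p ≤ γ ∧ γ < v p}
        = ∫⁻ γ in Ioi 0, μ.restrict {p | u p < v p} {p | u p ≤ γ ∧ γ < v p} := by
          refine lintegral_congr fun γ => ?_
          rw [Measure.restrict_apply' (measurableSet_lt hu hv),
            inter_eq_left.2 fun p hp => hp.1.trans_lt hp.2]
      _ = ∫⁻ p in {p | u p < v p}, ENNReal.ofReal (v p - u p) ∂μ :=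
          lintegral_measure_le_lt_eq_lintegral_ofReal_sub_of_sFinite hu hv hu0
      _ = ∫⁻ p, ENNReal.ofReal (v p - u p) ∂μ :=
          setLIntegral_eq_of_support_subset <|
            Function.support_subset_iff'.2 fun p (hp : ¬u p < v p) =>
            ENNReal.ofReal_eq_zero.2 (by linarith [not_lt.1 hp])
  · push Not at hfin
    obtain ⟨q, r, hqr, hB⟩ := hfin
    obtain ⟨hlhs, hrhs⟩ :=
      lintegral_measure_le_lt_eq_top hu hv hu0 (Rat.cast_lt.2 hqr) (top_le_iff.1 hB)
    rw [hlhs, hrhs]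

end Coarea

lemma half_lintegral_ofReal_abs_sub_eq {E : Type*} [MeasurableSpace E] {J : Measure (E × E)}
    (hsym : J.map Prod.swap = J) {f : E → ℝ} (hf : Measurable f) :
    (1 / 2 : ℝ≥0∞) * ∫⁻ p, ENNReal.ofReal |f p.2 - f p.1| ∂J
      = ∫⁻ p, ENNReal.ofReal (f p.1 - f p.2) ∂J := by
  have hm : Measurable fun p : E × E => ENNReal.ofReal (f p.1 - f p.2) :=
    ((hf.comp measurable_fst).sub (hf.comp measurable_snd)).ennreal_ofReal
  have hswap : ∫⁻ p, ENNReal.ofReal (f p.2 - f p.1) ∂J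
      = ∫⁻ p, ENNReal.ofReal (f p.1 - f p.2) ∂J := by
    conv_rhs => rw [← hsym]
    rw [lintegral_map hm measurable_swap]
    rfl
  have habs : ∀ a : ℝ, ENNReal.ofReal |a| = ENNReal.ofReal (-a) + ENNReal.ofReal a := fun a => by
    rcases le_total a 0 with ha | ha
    · rw [abs_of_nonpos ha, ENNReal.ofReal_of_nonpos ha, add_zero]
    · rw [abs_of_nonneg ha, ENNReal.ofReal_of_nonpos (neg_nonpos.2 ha), zero_add]
  simp_rw [habs, neg_sub]
  rw [lintegral_add_left hm, hswap, ← two_mul, ← mul_assoc, one_div,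
    ENNReal.inv_mul_cancel two_ne_zero ofNat_ne_top, one_mul]

lemma mul_measure_le_of_le_iInf {E : Type*} [MeasurableSpace E] {π : Measure E}
    [IsFiniteMeasure π] {Φ : Set E → ℝ≥0∞} {h : ℝ≥0∞}
    (hh : h ≤ ⨅ A ∈ {A : Set E | MeasurableSet A ∧ π A ≠ 0}, Φ A / π A)
    {A : Set E} (hA : MeasurableSet A) : h * π A ≤ Φ A := by
  rcases eq_or_ne (π A) 0 with hπ | hπ
  · simp [hπ]
  · exact (ENNReal.le_div_iff_mul_le (Or.inl hπ) (Or.inl (measure_ne_top π A))).1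
      (hh.trans (iInf₂_le A ⟨hA, hπ⟩))

theorem stmt5_general {E : Type*} [MeasurableSpace E] (π : Measure E) [IsProbabilityMeasure π]
    (J : Measure (E × E)) (hsym : Measure.map Prod.swap J = J)
    (K : Measure E)
    (h : ℝ≥0∞)
    (hh : h = ⨅ A ∈ {A : Set E | MeasurableSet A ∧ π A ≠ 0},
        (J (A ×ˢ Aᶜ) + K A) / π A)
    (f : E → ℝ) (hf : Measurable f) (hfnn : ∀ x, 0 ≤ f x)
    (hfint : ∫ x, f x ∂π = 1) :
    ((1 / 2 : ℝ≥0∞) * (∫⁻ p, ENNReal.ofReal |f p.2 - f p.1| ∂J)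
        + ∫⁻ x, ENNReal.ofReal (f x) ∂K
      = ∫⁻ γ in Ioi (0 : ℝ),
          (J ({x | γ < f x} ×ˢ {x | γ < f x}ᶜ) + K {x | γ < f x})) ∧
    h ≤ (1 / 2 : ℝ≥0∞) * (∫⁻ p, ENNReal.ofReal |f p.2 - f p.1| ∂J)
        + ∫⁻ x, ENNReal.ofReal (f x) ∂K := by
  have coarea : (1 / 2 : ℝ≥0∞) * (∫⁻ p, ENNReal.ofReal |f p.2 - f p.1| ∂J)
        + ∫⁻ x, ENNReal.ofReal (f x) ∂K
      = ∫⁻ γ in Ioi (0 : ℝ), (J ({x | γ < f x} ×ˢ {x | γ < f x}ᶜ) + K {x | γ < f x}) := by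
    rw [half_lintegral_ofReal_abs_sub_eq hsym hf,
      ← lintegral_measure_le_lt_eq_lintegral_ofReal_sub (u := fun p : E × E => f p.2)
        (v := fun p => f p.1) (by fun_prop) (by fun_prop) fun p => hfnn p.2,
      lintegral_eq_lintegral_meas_lt K (ae_of_all _ hfnn) hf.aemeasurable,
      ← lintegral_add_right _ (measurable_measure_setOf_lt K f)]
    refine lintegral_congr fun γ => ?_
    congr 2
    ext p
    simp [and_comm]
  have hπ : ∫⁻ γ in Ioi 0, π {x | γ < f x} = 1 := by
    have hint : Integrable f π := Integrable.of_integral_ne_zero (by simp [hfint])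
    rw [← lintegral_eq_lintegral_meas_lt π (ae_of_all _ hfnn) hf.aemeasurable,
      ← ofReal_integral_eq_lintegral_ofReal hint (ae_of_all _ hfnn), hfint, ENNReal.ofReal_one]
  refine ⟨coarea, ?_⟩
  calc h = ∫⁻ γ in Ioi 0, h * π {x | γ < f x} := by
        rw [lintegral_const_mul h (measurable_measure_setOf_lt π f), hπ, mul_one]
    _ ≤ ∫⁻ γ in Ioi (0 : ℝ), (J ({x | γ < f x} ×ˢ {x | γ < f x}ᶜ) + K {x | γ < f x}) :=
        lintegral_mono fun γ => mul_measure_le_of_le_iInf hh.le (hf measurableSet_Ioi)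
    _ = _ := coarea.symm

/-- Coarea formula for symmetric forms, and the resulting Cheeger lower bound:
for `f ≥ 0` with `π(f) = 1`,
`(1/2)∬ |f(y)−f(x)| dJ + ∫ f dK = ∫₀^∞ [J(A_γ × A_γᶜ) + K(A_γ)] dγ ≥ h`,
where `A_γ = {f > γ}` and `h` is the Cheeger constant. -/
theorem stmt5 {E : Type*} [MeasurableSpace E] (π : Measure E) [IsProbabilityMeasure π]
    (J : Measure (E × E)) (hsym : Measure.map Prod.swap J = J)
    (hdiag : J {p : E × E | p.1 = p.2} = 0)
    (K : Measure E)
    (h : ℝ≥0∞)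
    (hh : h = ⨅ A ∈ {A : Set E | MeasurableSet A ∧ π A ≠ 0},
        (J (A ×ˢ Aᶜ) + K A) / π A)
    (f : E → ℝ) (hf : Measurable f) (hfnn : ∀ x, 0 ≤ f x)
    (hfint : ∫ x, f x ∂π = 1) :
    ((1 / 2 : ℝ≥0∞) * (∫⁻ p, ENNReal.ofReal |f p.2 - f p.1| ∂J)
        + ∫⁻ x, ENNReal.ofReal (f x) ∂K
      = ∫⁻ γ in Ioi (0 : ℝ),
          (J ({x | γ < f x} ×ˢ {x | γ < f x}ᶜ) + K {x | γ < f x})) ∧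
    h ≤ (1 / 2 : ℝ≥0∞) * (∫⁻ p, ENNReal.ofReal |f p.2 - f p.1| ∂J)
        + ∫⁻ x, ENNReal.ofReal (f x) ∂K :=
  stmt5_general π J hsym K h hh f hf hfnn hfint
end

section
/- Functional characterization of the Cheeger constant k': Define k' = inf { J(A × Aᶜ)/π(A) : 0 < π(A) ≤ 1/2 }. Then k' = inf { (1/2)∬ J(dx,dy)|f(x) − f(y)| : f ∈ L¹₊(π), min_{c∈ℝ} π(|f − c|) = 1 }. -/
/-!
Symmetry of `J` turns `(1/2)∬ |f x - f y| dJ` into `∬ (f x - f y)⁺ dJ`, which by the coarea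
formula is `∫ J({f > t} × {f ≤ t}) dt`. Split at a median `m` of `f`: for `t > m` the level set
`{f > t}`, and for `t < m` its complement, has mass at most `1/2`, so the integrand is at least
`k' · π {min f m ≤ t < max f m}`, and integrating gives `k' · π|f - m| ≥ k'`. The measure `J` need
not be σ-finite: Tonelli is applied to its restriction to `{f x > f y}`, which is σ-finite as soon
as `∬ (f x - f y)⁺ dJ` is finite. Conversely, for `0 < π A ≤ 1/2` the function `1_A / π A` is
admissible (the minimum over `c` is attained at `c = 0`) and gives `J (A × Aᶜ) / π A`.
-/

open MeasureTheory Set ENNReal Filter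

theorem ofReal_abs_sub_eq_add (a b : ℝ) :
    ENNReal.ofReal |a - b| = ENNReal.ofReal (a - b) + ENNReal.ofReal (b - a) := by
  rcases le_total b a with h | h
  · rw [abs_of_nonneg (sub_nonneg.2 h), ENNReal.ofReal_of_nonpos (sub_nonpos.2 h), add_zero]
  · rw [abs_of_nonpos (sub_nonpos.2 h), neg_sub, ENNReal.ofReal_of_nonpos (sub_nonpos.2 h),
      zero_add]

section Coarea

variable {X : Type*} [MeasurableSpace X] {ν : Measure X}

theorem sigmaFinite_restrict_support_of_lintegral_ne_top {F : X → ℝ≥0∞} (hF : Measurable F)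
    (hfin : ∫⁻ x, F x ∂ν ≠ ∞) : SigmaFinite (ν.restrict (Function.support F)) := by
  have hsupp := measurableSet_support hF
  refine ⟨⟨⟨fun n => {x | (n : ℝ≥0∞)⁻¹ ≤ F x} ∪ (Function.support F)ᶜ, fun _ => trivial,
    fun n => ?_, ?_⟩⟩⟩
  · have hn : (n : ℝ≥0∞)⁻¹ ≠ 0 := ENNReal.inv_ne_zero.2 (natCast_ne_top n)
    have hmarkov := mul_meas_ge_le_lintegral₀ (μ := ν) hF.aemeasurable (n : ℝ≥0∞)⁻¹
    calc ν.restrict (Function.support F) ({x | (n : ℝ≥0∞)⁻¹ ≤ F x} ∪ (Function.support F)ᶜ)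
        ≤ ν {x | (n : ℝ≥0∞)⁻¹ ≤ F x} := by
          rw [Measure.restrict_apply' hsupp, union_inter_distrib_right, compl_inter_self,
            union_empty]
          exact measure_mono inter_subset_left
      _ < ∞ := lt_top_of_mul_ne_top_right (ne_top_of_le_ne_top hfin hmarkov) hn
  · refine eq_univ_of_forall fun x => mem_iUnion.2 ?_
    by_cases hx : F x = 0
    · exact ⟨0, Or.inr (Function.notMem_support.2 hx)⟩
    · obtain ⟨n, hn⟩ := exists_inv_nat_lt hx
      exact ⟨n, Or.inl hn.le⟩

theorem lintegral_ofReal_sub_eq_lintegral_measure {g h : X → ℝ} (hg : Measurable g)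
    (hh : Measurable h) [SigmaFinite (ν.restrict {x | h x < g x})] :
    ∫⁻ x, ENNReal.ofReal (g x - h x) ∂ν = ∫⁻ t, ν {x | h x ≤ t ∧ t < g x} := by
  have hmeas : MeasurableSet {p : X × ℝ | h p.1 ≤ p.2 ∧ p.2 < g p.1} :=
    (measurableSet_le (hh.comp measurable_fst) measurable_snd).inter
      (measurableSet_lt measurable_snd (hg.comp measurable_fst))
  calc ∫⁻ x, ENNReal.ofReal (g x - h x) ∂ν
      = ∫⁻ x in {x | h x < g x}, ENNReal.ofReal (g x - h x) ∂ν := by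
        refine (setLIntegral_eq_of_support_subset fun x hx => ?_).symm
        simpa [sub_pos] using hx
    _ = ∫⁻ x in {x | h x < g x}, ∫⁻ t, (Ico (h x) (g x)).indicator 1 t ∂volume ∂ν := by
        simp only [lintegral_indicator_one measurableSet_Ico, Real.volume_Ico]
    _ = ∫⁻ t, ∫⁻ x in {x | h x < g x}, {x | h x ≤ t ∧ t < g x}.indicator 1 x ∂ν :=
        lintegral_lintegral_swap (by exact (measurable_one.indicator hmeas).aemeasurable)
    _ = ∫⁻ t, ν {x | h x ≤ t ∧ t < g x} := by
        refine lintegral_congr fun t => ?_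
        have hmeas_t : MeasurableSet {x | h x ≤ t ∧ t < g x} :=
          (measurableSet_le hh measurable_const).inter (measurableSet_lt measurable_const hg)
        rw [lintegral_indicator_one hmeas_t]
        exact Measure.restrict_eq_self _ fun x hx => hx.1.trans_lt hx.2

end Coarea

section Median

variable (μ : Measure ℝ) [IsProbabilityMeasure μ]

theorem measure_Ioi_le_half_of_half_le_measure_Iic {t : ℝ} (ht : 1 / 2 ≤ μ (Iic t)) :
    μ (Ioi t) ≤ 1 / 2 := by
  have hsum : μ (Iic t) + μ (Ioi t) = 1 := by
    rw [← compl_Iic, measure_add_measure_compl measurableSet_Iic, measure_univ]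
  refine ENNReal.le_of_add_le_add_left (a := 1 / 2) (by norm_num) ?_
  calc 1 / 2 + μ (Ioi t) ≤ μ (Iic t) + μ (Ioi t) := by gcongr
    _ = 1 / 2 + 1 / 2 := by rw [hsum, ENNReal.add_halves]

theorem exists_forall_measure_Ioi_le_half_and_measure_Iic_le_half :
    ∃ m, (∀ t, m < t → μ (Ioi t) ≤ 1 / 2) ∧ ∀ t < m, μ (Iic t) ≤ 1 / 2 := by
  set S := {t | 1 / 2 ≤ μ (Iic t)}
  have hhalf : (1 / 2 : ℝ≥0∞) < 1 := ENNReal.half_lt_self one_ne_zero one_ne_top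
  have hS : S.Nonempty := by
    have := tendsto_measure_Iic_atTop μ
    rw [measure_univ] at this
    exact (this.eventually (eventually_ge_nhds hhalf)).exists
  have hSbdd : BddBelow S := by
    have := tendsto_measure_Ici_atBot μ
    rw [measure_univ] at this
    obtain ⟨a, ha⟩ := eventually_atBot.1 (this.eventually (eventually_gt_nhds hhalf))
    refine ⟨a, fun s hs => le_of_not_gt fun hsa => ?_⟩
    have hlt : 1 / 2 < μ (Ioi s) := (ha a le_rfl).trans_le (measure_mono (Ici_subset_Ioi.2 hsa))
    exact hlt.not_ge (measure_Ioi_le_half_of_half_le_measure_Iic μ hs)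
  refine ⟨sInf S, fun t ht => ?_, fun t ht =>
    (not_le.1 (notMem_of_lt_csInf (s := S) ht hSbdd)).le⟩
  obtain ⟨s, hs, hst⟩ := exists_lt_of_csInf_lt hS ht
  exact measure_Ioi_le_half_of_half_le_measure_Iic μ
    (hs.trans (measure_mono (Iic_subset_Iic.2 hst.le)))

end Median

section Cheeger

noncomputable def cheegerConstant {E : Type*} [MeasurableSpace E] (π : Measure E)
    (J : Measure (E × E)) : ℝ≥0∞ :=
  ⨅ A ∈ {A : Set E | MeasurableSet A ∧ 0 < π A ∧ π A ≤ 1 / 2}, J (A ×ˢ Aᶜ) / π A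

variable {E : Type*} [MeasurableSpace E] (π : Measure E) {J : Measure (E × E)}

theorem cheegerConstant_mul_le {A : Set E} (hA : MeasurableSet A) (hA2 : π A ≤ 1 / 2) :
    cheegerConstant π J * π A ≤ J (A ×ˢ Aᶜ) := by
  rcases eq_or_ne (π A) 0 with hA0 | hA0
  · simp [hA0]
  have hAtop : π A ≠ ∞ := ne_top_of_le_ne_top (by norm_num) hA2
  exact (ENNReal.le_div_iff_mul_le (Or.inl hA0) (Or.inl hAtop)).1
    (iInf₂_le A ⟨hA, pos_iff_ne_zero.2 hA0, hA2⟩)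

theorem measure_prod_comm_of_map_swap (hsym : J.map Prod.swap = J) {B C : Set E}
    (hB : MeasurableSet B) (hC : MeasurableSet C) : J (B ×ˢ C) = J (C ×ˢ B) := by
  conv_lhs => rw [← hsym]
  rw [Measure.map_apply measurable_swap (hB.prod hC), preimage_swap_prod]

theorem half_mul_lintegral_ofReal_abs_sub (hsym : J.map Prod.swap = J) {f : E → ℝ}
    (hf : Measurable f) :
    (1 / 2 : ℝ≥0∞) * ∫⁻ p, ENNReal.ofReal |f p.1 - f p.2| ∂J
      = ∫⁻ p, ENNReal.ofReal (f p.1 - f p.2) ∂J := by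
  have hdiff : Measurable fun p : E × E => ENNReal.ofReal (f p.1 - f p.2) :=
    ((hf.comp measurable_fst).sub (hf.comp measurable_snd)).ennreal_ofReal
  have hswap : ∫⁻ p, ENNReal.ofReal (f p.2 - f p.1) ∂J
      = ∫⁻ p, ENNReal.ofReal (f p.1 - f p.2) ∂J := by
    conv_rhs => rw [← hsym]
    exact (lintegral_map hdiff measurable_swap).symm
  simp_rw [ofReal_abs_sub_eq_add]
  rw [lintegral_add_left hdiff, hswap, ← two_mul, ← mul_assoc, one_div,
    ENNReal.inv_mul_cancel two_ne_zero ofNat_ne_top, one_mul]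

theorem lintegral_ofReal_sub_eq_lintegral_measure_prod_compl {f : E → ℝ} (hf : Measurable f)
    (hfin : ∫⁻ p, ENNReal.ofReal (f p.1 - f p.2) ∂J ≠ ∞) :
    ∫⁻ p, ENNReal.ofReal (f p.1 - f p.2) ∂J
      = ∫⁻ t, J ({x | t < f x} ×ˢ {x | t < f x}ᶜ) := by
  have hf₁ : Measurable fun p : E × E => f p.1 := hf.comp measurable_fst
  have hf₂ : Measurable fun p : E × E => f p.2 := hf.comp measurable_snd
  have hsupp : Function.support (fun p : E × E => ENNReal.ofReal (f p.1 - f p.2))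
      = {p | f p.2 < f p.1} := by
    ext p; simp
  have : SigmaFinite (J.restrict {p | f p.2 < f p.1}) :=
    hsupp ▸ sigmaFinite_restrict_support_of_lintegral_ne_top (hf₁.sub hf₂).ennreal_ofReal hfin
  rw [lintegral_ofReal_sub_eq_lintegral_measure hf₁ hf₂]
  refine lintegral_congr fun t => congrArg J (ext fun p => ?_)
  simp [and_comm]

theorem cheegerConstant_mul_measure_le_of_ne_median (hsym : J.map Prod.swap = J) {f : E → ℝ}
    (hf : Measurable f) {m t : ℝ} (hm_gt : ∀ s, m < s → π (f ⁻¹' Ioi s) ≤ 1 / 2)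
    (hm_lt : ∀ s < m, π (f ⁻¹' Iic s) ≤ 1 / 2) (ht : t ≠ m) :
    cheegerConstant π J * π {x | min (f x) m ≤ t ∧ t < max (f x) m}
      ≤ J ({x | t < f x} ×ˢ {x | t < f x}ᶜ) := by
  have hlevel : MeasurableSet {x | t < f x} := measurableSet_lt measurable_const hf
  rcases ht.lt_or_gt with htm | hmt
  · have hset : {x | min (f x) m ≤ t ∧ t < max (f x) m} = {x | t < f x}ᶜ := by
      ext x; simp [htm, htm.not_ge]
    have hπ : π {x | t < f x}ᶜ ≤ 1 / 2 := by
      convert hm_lt t htm using 2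
      ext x; simp
    rw [hset, measure_prod_comm_of_map_swap hsym hlevel hlevel.compl, ← compl_compl {x | t < f x},
      compl_compl {x | t < f x}ᶜ]
    exact cheegerConstant_mul_le π hlevel.compl hπ
  · have hset : {x | min (f x) m ≤ t ∧ t < max (f x) m} = {x | t < f x} := by
      ext x; simp [hmt.le, hmt.not_gt]
    rw [hset]
    exact cheegerConstant_mul_le π hlevel (hm_gt t hmt)

theorem cheegerConstant_le_half_mul_lintegral [IsProbabilityMeasure π]
    (hsym : J.map Prod.swap = J) {f : E → ℝ} (hf : Measurable f) (hfi : Integrable f π)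
    (hf1 : 1 ≤ ⨅ c : ℝ, ∫ x, |f x - c| ∂π) :
    cheegerConstant π J ≤ (1 / 2 : ℝ≥0∞) * ∫⁻ p, ENNReal.ofReal |f p.1 - f p.2| ∂J := by
  rw [half_mul_lintegral_ofReal_abs_sub hsym hf]
  by_cases hfin : ∫⁻ p, ENNReal.ofReal (f p.1 - f p.2) ∂J = ∞
  · simp [hfin]
  rw [lintegral_ofReal_sub_eq_lintegral_measure_prod_compl hf hfin]
  have := Measure.isProbabilityMeasure_map (μ := π) hf.aemeasurable
  obtain ⟨m, hm_gt, hm_lt⟩ :=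
    exists_forall_measure_Ioi_le_half_and_measure_Iic_le_half (π.map f)
  simp only [Measure.map_apply hf measurableSet_Ioi, Measure.map_apply hf measurableSet_Iic]
    at hm_gt hm_lt
  have hone : 1 ≤ ∫⁻ x, ENNReal.ofReal |f x - m| ∂π := by
    have hint : Integrable (fun x => |f x - m|) π := (hfi.sub (integrable_const m)).abs
    have hbdd : BddBelow (range fun c : ℝ => ∫ x, |f x - c| ∂π) :=
      ⟨0, by rintro _ ⟨c, rfl⟩; exact integral_nonneg fun x => abs_nonneg _⟩
    rw [← ofReal_integral_eq_lintegral_ofReal hint (ae_of_all _ fun x => abs_nonneg _)]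
    exact ENNReal.one_le_ofReal.2 (hf1.trans (ciInf_le hbdd m))
  have hcoarea : ∫⁻ x, ENNReal.ofReal |f x - m| ∂π
      = ∫⁻ t, π {x | min (f x) m ≤ t ∧ t < max (f x) m} := by
    simp_rw [← max_sub_min_eq_abs']
    exact lintegral_ofReal_sub_eq_lintegral_measure (ν := π) (hf.max measurable_const)
      (hf.min measurable_const)
  calc cheegerConstant π J ≤ cheegerConstant π J * ∫⁻ x, ENNReal.ofReal |f x - m| ∂π :=
        le_mul_of_one_le_right zero_le hone
    _ ≤ ∫⁻ t, cheegerConstant π J * π {x | min (f x) m ≤ t ∧ t < max (f x) m} := by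
        rw [hcoarea]; exact lintegral_const_mul_le _ _
    _ ≤ ∫⁻ t, J ({x | t < f x} ×ˢ {x | t < f x}ᶜ) :=
        lintegral_mono_ae (((countable_singleton m).ae_notMem volume).mono fun t ht =>
          cheegerConstant_mul_measure_le_of_ne_median π hsym hf hm_gt hm_lt ht)

theorem integral_abs_indicator_sub [IsFiniteMeasure π] {A : Set E} (hA : MeasurableSet A)
    (r c : ℝ) :
    ∫ x, |A.indicator (fun _ => r) x - c| ∂π = |r - c| * π.real A + |c| * π.real Aᶜ := by
  have hsplit : (fun x => |A.indicator (fun _ => r) x - c|)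
      = fun x => A.indicator (fun _ => |r - c|) x + Aᶜ.indicator (fun _ => |c|) x := by
    funext x
    by_cases hx : x ∈ A <;> simp [hx]
  rw [hsplit, integral_add ((integrable_const _).indicator hA)
    ((integrable_const _).indicator hA.compl), integral_indicator_const _ hA,
    integral_indicator_const _ hA.compl, smul_eq_mul, smul_eq_mul, mul_comm (π.real A),
    mul_comm (π.real Aᶜ)]

theorem iInf_integral_abs_indicator_inv_sub [IsProbabilityMeasure π] {A : Set E}
    (hA : MeasurableSet A) (hA0 : 0 < π.real A) (hA2 : π.real A ≤ 1 / 2) :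
    ⨅ c : ℝ, ∫ x, |A.indicator (fun _ => (π.real A)⁻¹) x - c| ∂π = 1 := by
  simp_rw [integral_abs_indicator_sub π hA, probReal_compl_eq_one_sub hA]
  set a := π.real A
  have hinv : a⁻¹ * a = 1 := inv_mul_cancel₀ hA0.ne'
  have ha1 : 0 ≤ 1 - a := by linarith
  have hbdd : BddBelow (range fun c : ℝ => |a⁻¹ - c| * a + |c| * (1 - a)) :=
    ⟨0, by rintro _ ⟨c, rfl⟩; positivity⟩
  refine le_antisymm (ciInf_le_of_le hbdd 0 ?_) (le_ciInf fun c => ?_)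
  · simp [abs_of_pos (inv_pos.2 hA0), hinv]
  · rcases le_or_gt 0 c with hc | hc
    · nlinarith [le_abs_self (a⁻¹ - c), abs_of_nonneg hc]
    · nlinarith [le_abs_self (a⁻¹ - c), abs_of_neg hc]

theorem half_mul_lintegral_ofReal_abs_indicator_sub (hsym : J.map Prod.swap = J) {A : Set E}
    (hA : MeasurableSet A) {r : ℝ} (hr : 0 ≤ r) :
    (1 / 2 : ℝ≥0∞) * ∫⁻ p, ENNReal.ofReal |A.indicator (fun _ => r) p.1
      - A.indicator (fun _ => r) p.2| ∂J = ENNReal.ofReal r * J (A ×ˢ Aᶜ) := by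
  rw [half_mul_lintegral_ofReal_abs_sub hsym (measurable_const.indicator hA)]
  have hjump : (fun p : E × E => ENNReal.ofReal (A.indicator (fun _ => r) p.1
      - A.indicator (fun _ => r) p.2)) = (A ×ˢ Aᶜ).indicator fun _ => ENNReal.ofReal r := by
    funext p
    by_cases h₁ : p.1 ∈ A <;> by_cases h₂ : p.2 ∈ A <;> simp [h₁, h₂, hr]
  rw [hjump, lintegral_indicator_const (hA.prod hA.compl)]

end Cheeger

theorem stmt7_general {E : Type*} [MeasurableSpace E] (π : Measure E) [IsProbabilityMeasure π]
    (J : Measure (E × E)) (hsym : Measure.map Prod.swap J = J) :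
    (⨅ A ∈ {A : Set E | MeasurableSet A ∧ 0 < π A ∧ π A ≤ 1 / 2}, J (A ×ˢ Aᶜ) / π A)
      = ⨅ f ∈ {f : E → ℝ | Measurable f ∧ (∀ x, 0 ≤ f x) ∧ Integrable f π ∧
            (⨅ c : ℝ, ∫ x, |f x - c| ∂π) = 1},
          (1 / 2 : ℝ≥0∞) * ∫⁻ p, ENNReal.ofReal |f p.1 - f p.2| ∂J := by
  apply le_antisymm
  · exact le_iInf₂ fun f ⟨hf, _, hfi, hf1⟩ =>
      cheegerConstant_le_half_mul_lintegral π hsym hf hfi hf1.ge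
  · refine le_iInf₂ fun A ⟨hA, hA0, hA2⟩ => ?_
    have hA0' : 0 < π.real A := ENNReal.toReal_pos hA0.ne' (measure_ne_top π A)
    have hA2' : π.real A ≤ 1 / 2 := by
      simpa [measureReal_def] using ENNReal.toReal_mono (by norm_num) hA2
    refine iInf₂_le_of_le _ ⟨measurable_const.indicator hA,
      fun x => indicator_nonneg (fun _ _ => inv_nonneg.2 hA0'.le) x,
      (integrable_const _).indicator hA, iInf_integral_abs_indicator_inv_sub π hA hA0' hA2'⟩
      (le_of_eq ?_)
    rw [half_mul_lintegral_ofReal_abs_indicator_sub hsym hA (inv_nonneg.2 hA0'.le),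
      ENNReal.ofReal_inv_of_pos hA0', ofReal_measureReal, ENNReal.div_eq_inv_mul]

/-- Functional characterization of the Cheeger constant `k'`:
`k' = inf { (1/2)∬ |f(x)−f(y)| dJ : f ∈ L¹₊(π), min_c π(|f−c|) = 1 }`. -/
theorem stmt7 {E : Type*} [MeasurableSpace E] (π : Measure E) [IsProbabilityMeasure π]
    (J : Measure (E × E)) (hsym : Measure.map Prod.swap J = J)
    (hdiag : J {p : E × E | p.1 = p.2} = 0) :
    (⨅ A ∈ {A : Set E | MeasurableSet A ∧ 0 < π A ∧ π A ≤ 1 / 2}, J (A ×ˢ Aᶜ) / π A)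
      = ⨅ f ∈ {f : E → ℝ | Measurable f ∧ (∀ x, 0 ≤ f x) ∧ Integrable f π ∧
            (⨅ c : ℝ, ∫ x, |f x - c| ∂π) = 1},
          (1 / 2 : ℝ≥0∞) * ∫⁻ p, ENNReal.ofReal |f p.1 - f p.2| ∂J :=
  stmt7_general π J hsym
end

section
/- Birth-death Cheeger criterion: Consider a birth-death chain on ℤ₊ with birth rates b_i > 0, death rates a_i > 0 (a_0 = 0), reversible measure π, and J(i,j) = π_i q_{ij}. Fix α ≥ 0 and set J^{(α)}(i,j) = π_i q_{ij}/((a_i+b_i)∨(a_j+b_j))^α for |i−j|=1. If there is c > 0 such that π_i a_i / ((a_i+b_i)∨(a_{i−1}+b_{i−1}))^α ≥ c ∑_{j≥i} π_j for all i ≥ 1, then k^{(α)'} := inf_{0<π(A)≤1/2} J^{(α)}(A×Aᶜ)/π(A) ≥ c. Conversely, if k^{(α)'} > 0 then such a constant c exists. -/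
open Set ENNReal Filter Topology

/-! The flux of a nearest-neighbour kernel only crosses edges `{i - 1, i}`, and
`J^{(α)}(i, i - 1)` is exactly the weight `π_i a_i / ((a_i+b_i)∨(a_{i-1}+b_{i-1}))^α`.
If `0 ∉ A`, every point of `A` lies above the left end `i` of its block in `A`, and `i - 1 ∉ A`;
so `c π(A) ≤ c ∑_{blocks} π([i, ∞)) ≤ ∑_{blocks} J(i, i - 1) ≤ J(A × Aᶜ)`. If `0 ∈ A`, apply this
to `Aᶜ`: detailed balance makes `J` symmetric, so `J(Aᶜ × A) = J(A × Aᶜ)`, and `π(A) ≤ π(Aᶜ)`.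
Conversely, testing `k'` on the tails `[i, ∞)` of mass at most `1/2` gives the inequality for all
large `i`; the finitely many remaining weights are positive, so shrinking the constant handles them.
-/

section Cheeger

variable {ι : Type*}

noncomputable def cheegerConst (m f : Set ι → ℝ≥0∞) : ℝ≥0∞ :=
  ⨅ A ∈ {A : Set ι | 0 < m A ∧ m A ≤ 1 / 2}, f A / m A

variable {m f : Set ι → ℝ≥0∞}

lemma le_cheegerConst {c : ℝ≥0∞} (h : ∀ A, m A ≤ 1 / 2 → c * m A ≤ f A) :
    c ≤ cheegerConst m f :=
  le_iInf₂ fun A ⟨hA0, hA⟩ =>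
    (ENNReal.le_div_iff_mul_le (Or.inl hA0.ne') (Or.inl (hA.trans_lt (by norm_num)).ne)).2
      (h A hA)

lemma cheegerConst_mul_le {A : Set ι} (hA : m A ≤ 1 / 2) : cheegerConst m f * m A ≤ f A := by
  rcases eq_zero_or_pos (m A) with h0 | h0
  · simp [h0]
  · exact (ENNReal.le_div_iff_mul_le (Or.inl h0.ne') (Or.inl (hA.trans_lt (by norm_num)).ne)).1
      (iInf₂_le A ⟨h0, hA⟩)

lemma tsum_subtype_le_tsum_compl_of_le_half {μ : ι → ℝ≥0∞} (hμ : ∑' i, μ i = 1) {A : Set ι}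
    (hA : ∑' i : A, μ i ≤ 1 / 2) : ∑' i : A, μ i ≤ ∑' i : ↥Aᶜ, μ i := by
  have htotal : ∑' i : A, μ i + ∑' i : ↥Aᶜ, μ i = 1 :=
    (ENNReal.summable.tsum_add_tsum_compl ENNReal.summable).trans hμ
  have hhalf : 1 / 2 ≤ ∑' i : ↥Aᶜ, μ i := by
    refine (ENNReal.add_le_add_iff_left (a := 1 / 2) (by norm_num)).1 ?_
    calc 1 / 2 + 1 / 2 = ∑' i : A, μ i + ∑' i : ↥Aᶜ, μ i := by rw [ENNReal.add_halves, htotal]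
      _ ≤ 1 / 2 + ∑' i : ↥Aᶜ, μ i := by gcongr
  exact hA.trans hhalf

noncomputable def edgeFlux (J : ι → ι → ℝ≥0∞) (A : Set ι) : ℝ≥0∞ := ∑' i : A, ∑' j : ↥Aᶜ, J i j

lemma edgeFlux_compl {J : ι → ι → ℝ≥0∞} (hJ : ∀ i j, J i j = J j i) (A : Set ι) :
    edgeFlux J Aᶜ = edgeFlux J A := by
  rw [edgeFlux, edgeFlux, compl_compl, ENNReal.tsum_comm]
  exact tsum_congr fun j => tsum_congr fun i => hJ _ _

end Cheeger

section NatTail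

lemma tsum_ite_le_eq_tsum_Ici {M : Type*} [AddCommMonoid M] [TopologicalSpace M] (f : ℕ → M)
    (i : ℕ) : ∑' j, (if i ≤ j then f j else 0) = ∑' j : Ici i, f j := by
  rw [tsum_subtype]
  exact tsum_congr fun j => by simp [indicator_apply]

variable {G : Type*} [AddCommGroup G] [TopologicalSpace G] [IsTopologicalAddGroup G] [T2Space G]
  {f : ℕ → G}

lemma Summable.tsum_Ici_eq_tsum_sub_sum_range (hf : Summable f) (i : ℕ) :
    ∑' j : Ici i, f j = ∑' j, f j - ∑ j ∈ Finset.range i, f j := by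
  rw [← hf.sum_add_tsum_compl (s := Finset.range i), Finset.coe_range, compl_Iio]
  abel

lemma Summable.tendsto_tsum_Ici_atTop_zero (hf : Summable f) :
    Tendsto (fun i : ℕ => ∑' j : Ici i, f j) atTop (𝓝 0) := by
  simpa [hf.tsum_Ici_eq_tsum_sub_sum_range] using
    hf.hasSum.tendsto_sum_nat.const_sub (∑' j, f j)

end NatTail

section NearestNeighbour

def blockStarts (A : Set ℕ) : Set ℕ := {i | i ∈ A ∧ i - 1 ∉ A}

lemma mem_blockStarts {A : Set ℕ} {i : ℕ} : i ∈ blockStarts A ↔ i ∈ A ∧ i - 1 ∉ A := Iff.rfl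

lemma exists_mem_blockStarts_le {A : Set ℕ} (h0 : 0 ∉ A) {j : ℕ} (hj : j ∈ A) :
    ∃ i ∈ blockStarts A, i ≤ j := by
  induction j with
  | zero => exact absurd hj h0
  | succ n ih =>
    by_cases hn : n ∈ A
    · obtain ⟨i, hi, hin⟩ := ih hn
      exact ⟨i, hi, hin.trans n.le_succ⟩
    · exact ⟨n + 1, mem_blockStarts.2 ⟨hj, by simpa using hn⟩, le_rfl⟩

lemma tsum_subtype_le_tsum_blockStarts (μ : ℕ → ℝ≥0∞) {A : Set ℕ} (h0 : 0 ∉ A) :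
    ∑' j : A, μ j ≤ ∑' i : blockStarts A, ∑' j : Ici (i : ℕ), μ j := by
  calc ∑' j : A, μ j = ∑' j, A.indicator μ j := tsum_subtype A μ
    _ ≤ ∑' j, ∑' i : blockStarts A, (Ici (i : ℕ)).indicator μ j := by
      refine ENNReal.tsum_le_tsum fun j => ?_
      by_cases hj : j ∈ A
      · obtain ⟨i, hi, hij⟩ := exists_mem_blockStarts_le h0 hj
        rw [indicator_of_mem hj, ← indicator_of_mem (mem_Ici.2 hij) μ]
        exact ENNReal.le_tsum (f := fun i : blockStarts A => (Ici (i : ℕ)).indicator μ j)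
          ⟨i, hi⟩
      · simp [indicator_of_notMem hj]
    _ = ∑' i : blockStarts A, ∑' j : Ici (i : ℕ), μ j := by
      rw [ENNReal.tsum_comm]
      exact tsum_congr fun i => (tsum_subtype _ μ).symm

lemma tsum_blockStarts_le_edgeFlux (J : ℕ → ℕ → ℝ≥0∞) (A : Set ℕ) :
    ∑' i : blockStarts A, J i (i - 1) ≤ edgeFlux J A :=
  calc ∑' i : blockStarts A, J i (i - 1)
      ≤ ∑' i : blockStarts A, ∑' j : ↥Aᶜ, J i j :=
        ENNReal.tsum_le_tsum fun i =>
          ENNReal.le_tsum (f := fun j : ↥Aᶜ => J i j) ⟨_, (mem_blockStarts.1 i.2).2⟩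
    _ ≤ edgeFlux J A :=
        ENNReal.tsum_mono_subtype (fun i => ∑' j : ↥Aᶜ, J i j) fun _ hi => (mem_blockStarts.1 hi).1

variable {J : ℕ → ℕ → ℝ≥0∞} {μ : ℕ → ℝ≥0∞} {c : ℝ≥0∞}

lemma mul_tsum_le_edgeFlux_of_zero_notMem (hc : ∀ i, 1 ≤ i → c * ∑' j : Ici i, μ j ≤ J i (i - 1))
    {A : Set ℕ} (h0 : 0 ∉ A) : c * ∑' j : A, μ j ≤ edgeFlux J A :=
  calc c * ∑' j : A, μ j
      ≤ c * ∑' i : blockStarts A, ∑' j : Ici (i : ℕ), μ j := by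
        gcongr; exact tsum_subtype_le_tsum_blockStarts μ h0
    _ = ∑' i : blockStarts A, c * ∑' j : Ici (i : ℕ), μ j := ENNReal.tsum_mul_left.symm
    _ ≤ ∑' i : blockStarts A, J i (i - 1) :=
        ENNReal.tsum_le_tsum fun i =>
          hc i (Nat.one_le_iff_ne_zero.2 fun hi => h0 (hi ▸ (mem_blockStarts.1 i.2).1))
    _ ≤ edgeFlux J A := tsum_blockStarts_le_edgeFlux J A

lemma mul_tsum_le_edgeFlux (hJ : ∀ i j, J i j = J j i)
    (hc : ∀ i, 1 ≤ i → c * ∑' j : Ici i, μ j ≤ J i (i - 1)) {A : Set ℕ}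
    (hA : ∑' j : A, μ j ≤ ∑' j : ↥Aᶜ, μ j) : c * ∑' j : A, μ j ≤ edgeFlux J A := by
  by_cases h0 : 0 ∈ A
  · calc c * ∑' j : A, μ j ≤ c * ∑' j : ↥Aᶜ, μ j := by gcongr
      _ ≤ edgeFlux J Aᶜ := mul_tsum_le_edgeFlux_of_zero_notMem hc fun h => h h0
      _ = edgeFlux J A := edgeFlux_compl hJ A
  · exact mul_tsum_le_edgeFlux_of_zero_notMem hc h0

theorem le_cheegerConst_of_mul_tsum_Ici_le (hμ : ∑' i, μ i = 1) (hJ : ∀ i j, J i j = J j i)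
    (hc : ∀ i, 1 ≤ i → c * ∑' j : Ici i, μ j ≤ J i (i - 1)) :
    c ≤ cheegerConst (fun A => ∑' i : A, μ i) (edgeFlux J) :=
  le_cheegerConst fun _ hA =>
    mul_tsum_le_edgeFlux hJ hc (tsum_subtype_le_tsum_compl_of_le_half hμ hA)

lemma edgeFlux_Ici (hJ : ∀ i j, j ≠ i + 1 → i ≠ j + 1 → J i j = 0) {i : ℕ} (hi : 1 ≤ i) :
    edgeFlux J (Ici i) = J i (i - 1) := by
  have hout : i - 1 ∈ (Ici i)ᶜ := by simp only [mem_compl_iff, mem_Ici]; omega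
  rw [edgeFlux, tsum_eq_single ⟨i, mem_Ici.2 le_rfl⟩, tsum_eq_single ⟨i - 1, hout⟩]
  · intro q hq
    have hq' : (q : ℕ) < i := not_le.1 q.2
    have hq'' : (q : ℕ) ≠ i - 1 := fun h => hq (Subtype.ext h)
    exact hJ i q (by omega) (by omega)
  · intro p hp
    have hp' : i < p := lt_of_le_of_ne p.2 fun h => hp (Subtype.ext h.symm)
    refine ENNReal.tsum_eq_zero.2 fun q => ?_
    have hq' : (q : ℕ) < i := not_le.1 q.2
    exact hJ _ _ (by omega) (by omega)

theorem cheegerConst_mul_tsum_Ici_le (hJ : ∀ i j, j ≠ i + 1 → i ≠ j + 1 → J i j = 0) {i : ℕ}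
    (hi : 1 ≤ i) (hμi : ∑' j : Ici i, μ j ≤ 1 / 2) :
    cheegerConst (fun A => ∑' j : A, μ j) (edgeFlux J) * ∑' j : Ici i, μ j ≤ J i (i - 1) :=
  edgeFlux_Ici hJ hi ▸ cheegerConst_mul_le (f := edgeFlux J) hμi

end NearestNeighbour

lemma exists_pos_forall_mul_le {T w : ℕ → ℝ} {r : ℝ} (hr : 0 < r) (hT0 : ∀ i, 0 ≤ T i)
    (hT1 : ∀ i, T i ≤ 1) (hw : ∀ i, 1 ≤ i → 0 < w i) (hrw : ∀ᶠ i in atTop, r * T i ≤ w i) :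
    ∃ c, 0 < c ∧ ∀ i, 1 ≤ i → c * T i ≤ w i := by
  obtain ⟨N, hN⟩ := eventually_atTop.1 hrw
  set m := (Finset.Icc 1 (N + 1)).inf' (Finset.nonempty_Icc.2 (by omega)) w
  have hm : 0 < m := (Finset.lt_inf'_iff _).2 fun i hi => hw i (Finset.mem_Icc.1 hi).1
  refine ⟨min r m, lt_min hr hm, fun i hi => ?_⟩
  rcases le_or_gt N i with hNi | hiN
  · exact (mul_le_mul_of_nonneg_right (min_le_left r m) (hT0 i)).trans (hN i hNi)
  · calc min r m * T i ≤ min r m * 1 := mul_le_mul_of_nonneg_left (hT1 i) (lt_min hr hm).le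
      _ ≤ m := by simp
      _ ≤ w i := Finset.inf'_le w (Finset.mem_Icc.2 ⟨hi, by omega⟩)

section RealWeights

variable {π w : ℕ → ℝ} {J : ℕ → ℕ → ℝ≥0∞}

lemma ofReal_tsum_Ici (hπ0 : ∀ i, 0 ≤ π i) (hπsum : Summable π) (i : ℕ) :
    ENNReal.ofReal (∑' j : Ici i, π j) = ∑' j : Ici i, ENNReal.ofReal (π j) :=
  ENNReal.ofReal_tsum_of_nonneg (fun j => hπ0 j) (hπsum.subtype _)

theorem ofReal_le_cheegerConst (hπ0 : ∀ i, 0 ≤ π i) (hπsum : Summable π) (hπ1 : ∑' i, π i = 1)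
    (hJ : ∀ i j, J i j = J j i) (hJw : ∀ i, 1 ≤ i → J i (i - 1) = ENNReal.ofReal (w i))
    {c : ℝ} (hc : 0 ≤ c) (hcw : ∀ i, 1 ≤ i → c * ∑' j : Ici i, π j ≤ w i) :
    ENNReal.ofReal c ≤ cheegerConst (fun A => ∑' i : A, ENNReal.ofReal (π i)) (edgeFlux J) := by
  have hμ : ∑' i, ENNReal.ofReal (π i) = 1 := by
    rw [← ENNReal.ofReal_tsum_of_nonneg hπ0 hπsum, hπ1, ofReal_one]
  refine le_cheegerConst_of_mul_tsum_Ici_le (μ := fun i => ENNReal.ofReal (π i)) hμ hJ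
    fun i hi => ?_
  rw [← ofReal_tsum_Ici hπ0 hπsum, hJw i hi, ← ofReal_mul hc]
  exact ofReal_le_ofReal (hcw i hi)

theorem exists_pos_mul_tsum_Ici_le (hπ0 : ∀ i, 0 ≤ π i) (hπsum : Summable π)
    (hπ1 : ∑' i, π i = 1) (hJ : ∀ i j, j ≠ i + 1 → i ≠ j + 1 → J i j = 0)
    (hw : ∀ i, 1 ≤ i → 0 < w i) (hJw : ∀ i, 1 ≤ i → J i (i - 1) = ENNReal.ofReal (w i))
    (hk : 0 < cheegerConst (fun A => ∑' i : A, ENNReal.ofReal (π i)) (edgeFlux J)) :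
    ∃ c : ℝ, 0 < c ∧ ∀ i, 1 ≤ i → c * ∑' j : Ici i, π j ≤ w i := by
  obtain ⟨r, -, hr0, hrk⟩ := ENNReal.lt_iff_exists_real_btwn.1 hk
  have hr : 0 < r := ofReal_pos.1 hr0
  refine exists_pos_forall_mul_le hr (fun i => tsum_nonneg fun j => hπ0 j)
    (fun i => hπ1 ▸ hπsum.tsum_subtype_le π _ hπ0) hw ?_
  filter_upwards [eventually_ge_atTop 1, hπsum.tendsto_tsum_Ici_atTop_zero.eventually
    (eventually_le_nhds (by norm_num : (0 : ℝ) < 1 / 2))] with i hi hhalf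
  have h := cheegerConst_mul_tsum_Ici_le (μ := fun i => ENNReal.ofReal (π i)) hJ hi
    (by rw [← ofReal_tsum_Ici hπ0 hπsum]; exact (ofReal_le_ofReal hhalf).trans_eq (by simp))
  rw [← ofReal_tsum_Ici hπ0 hπsum, hJw i hi] at h
  rw [← ofReal_le_ofReal_iff (hw i hi).le, ofReal_mul hr.le]
  exact (mul_le_mul_left hrk.le _).trans h

end RealWeights

section RescaledKernel

variable {a b π : ℕ → ℝ} {α : ℝ} {Jα : ℕ → ℕ → ℝ}

lemma rescaledKernel_symm (hdb : ∀ i, π i * b i = π (i + 1) * a (i + 1))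
    (hJα : ∀ i j, Jα i j =
      if j = i + 1 then π i * b i / (max (a i + b i) (a j + b j)) ^ α
      else if i = j + 1 then π i * a i / (max (a i + b i) (a j + b j)) ^ α
      else 0) (i j : ℕ) : Jα i j = Jα j i := by
  rw [hJα i j, hJα j i]
  by_cases hij : j = i + 1
  · subst hij; simp [hdb, max_comm, show i ≠ i + 1 + 1 by omega]
  by_cases hji : i = j + 1
  · subst hji; simp [hdb, max_comm, show j ≠ j + 1 + 1 by omega]
  simp [hij, hji]

lemma rescaledKernel_eq_zero
    (hJα : ∀ i j, Jα i j =
      if j = i + 1 then π i * b i / (max (a i + b i) (a j + b j)) ^ α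
      else if i = j + 1 then π i * a i / (max (a i + b i) (a j + b j)) ^ α
      else 0) {i j : ℕ} (hij : j ≠ i + 1) (hji : i ≠ j + 1) : Jα i j = 0 := by
  rw [hJα, if_neg hij, if_neg hji]

lemma rescaledKernel_sub_one
    (hJα : ∀ i j, Jα i j =
      if j = i + 1 then π i * b i / (max (a i + b i) (a j + b j)) ^ α
      else if i = j + 1 then π i * a i / (max (a i + b i) (a j + b j)) ^ α
      else 0) {i : ℕ} (hi : 1 ≤ i) :
    Jα i (i - 1) = π i * a i / (max (a i + b i) (a (i - 1) + b (i - 1))) ^ α := by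
  rw [hJα, if_neg (by omega), if_pos (by omega)]

end RescaledKernel

theorem stmt13_general (a b : ℕ → ℝ) (π : ℕ → ℝ) (α : ℝ)
    (hapos : ∀ i, 1 ≤ i → 0 < a i) (hbpos : ∀ i, 0 < b i)
    (hπpos : ∀ i, 0 < π i) (hπsum : Summable π) (hπ1 : (∑' i, π i) = 1)
    (hdb : ∀ i, π i * b i = π (i + 1) * a (i + 1))
    (Jα : ℕ → ℕ → ℝ)
    (hJα : ∀ i j, Jα i j =
      if j = i + 1 then π i * b i / (max (a i + b i) (a j + b j)) ^ α
      else if i = j + 1 then π i * a i / (max (a i + b i) (a j + b j)) ^ α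
      else 0)
    (flux πm : Set ℕ → ℝ≥0∞)
    (hflux : ∀ A, flux A = ∑' i : A, ∑' j : ↥Aᶜ, ENNReal.ofReal (Jα i j))
    (hπm : ∀ A : Set ℕ, πm A = ∑' i : A, ENNReal.ofReal (π i))
    (k' : ℝ≥0∞)
    (hk' : k' = ⨅ A ∈ {A : Set ℕ | 0 < πm A ∧ πm A ≤ 1 / 2}, flux A / πm A) :
    (∀ c : ℝ, 0 < c →
      (∀ i, 1 ≤ i →
        c * (∑' j, if i ≤ j then π j else 0)
          ≤ π i * a i / (max (a i + b i) (a (i - 1) + b (i - 1))) ^ α) →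
      ENNReal.ofReal c ≤ k') ∧
    (0 < k' → ∃ c : ℝ, 0 < c ∧ ∀ i, 1 ≤ i →
      c * (∑' j, if i ≤ j then π j else 0)
        ≤ π i * a i / (max (a i + b i) (a (i - 1) + b (i - 1))) ^ α) := by
  have hπ0 (i : ℕ) : 0 ≤ π i := (hπpos i).le
  set J : ℕ → ℕ → ℝ≥0∞ := fun i j => ENNReal.ofReal (Jα i j)
  have hk : k' = cheegerConst (fun A => ∑' i : A, ENNReal.ofReal (π i)) (edgeFlux J) := by
    rw [hk', show πm = _ from funext hπm, show flux = _ from funext hflux]; rfl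
  have hedge (i : ℕ) (hi : 1 ≤ i) : J i (i - 1) =
      ENNReal.ofReal (π i * a i / (max (a i + b i) (a (i - 1) + b (i - 1))) ^ α) := by
    simp only [J, rescaledKernel_sub_one hJα hi]
  have hweight (i : ℕ) (hi : 1 ≤ i) :
      0 < π i * a i / (max (a i + b i) (a (i - 1) + b (i - 1))) ^ α := by
    have := hapos i hi; have := hbpos i; have := hπpos i
    positivity
  simp only [tsum_ite_le_eq_tsum_Ici, hk]
  refine ⟨fun c hc hcw => ofReal_le_cheegerConst hπ0 hπsum hπ1 ?_ hedge hc.le hcw,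
    exists_pos_mul_tsum_Ici_le hπ0 hπsum hπ1 ?_ hweight hedge⟩
  · exact fun i j => by simp only [J, rescaledKernel_symm hdb hJα i j]
  · exact fun i j hij hji => by simp only [J, rescaledKernel_eq_zero hJα hij hji, ofReal_zero]

/-- Theorem 4.1(1): Cheeger criterion for birth-death chains. With
`J^{(α)}(i,j) = π_i q_{ij}/((a_i+b_i)∨(a_j+b_j))^α`, the rescaled Cheeger
constant `k^{(α)'}` is at least `c > 0` provided
`π_i a_i / ((a_i+b_i)∨(a_{i−1}+b_{i−1}))^α ≥ c ∑_{j≥i} π_j` for all `i ≥ 1`;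
conversely, `k^{(α)'} > 0` implies such a `c` exists. -/
theorem stmt13 (a b : ℕ → ℝ) (π : ℕ → ℝ) (α : ℝ) (hα : 0 ≤ α)
    (ha0 : a 0 = 0) (hapos : ∀ i, 1 ≤ i → 0 < a i) (hbpos : ∀ i, 0 < b i)
    (hπpos : ∀ i, 0 < π i) (hπsum : Summable π) (hπ1 : (∑' i, π i) = 1)
    (hdb : ∀ i, π i * b i = π (i + 1) * a (i + 1))
    (Jα : ℕ → ℕ → ℝ)
    (hJα : ∀ i j, Jα i j =
      if j = i + 1 then π i * b i / (max (a i + b i) (a j + b j)) ^ α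
      else if i = j + 1 then π i * a i / (max (a i + b i) (a j + b j)) ^ α
      else 0)
    (flux πm : Set ℕ → ℝ≥0∞)
    (hflux : ∀ A, flux A = ∑' i : A, ∑' j : ↥Aᶜ, ENNReal.ofReal (Jα i j))
    (hπm : ∀ A : Set ℕ, πm A = ∑' i : A, ENNReal.ofReal (π i))
    (k' : ℝ≥0∞)
    (hk' : k' = ⨅ A ∈ {A : Set ℕ | 0 < πm A ∧ πm A ≤ 1 / 2}, flux A / πm A) :
    (∀ c : ℝ, 0 < c →
      (∀ i, 1 ≤ i →
        c * (∑' j, if i ≤ j then π j else 0)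
          ≤ π i * a i / (max (a i + b i) (a (i - 1) + b (i - 1))) ^ α) →
      ENNReal.ofReal c ≤ k') ∧
    (0 < k' → ∃ c : ℝ, 0 < c ∧ ∀ i, 1 ≤ i →
      c * (∑' j, if i ≤ j then π j else 0)
        ≤ π i * a i / (max (a i + b i) (a (i - 1) + b (i - 1))) ^ α) :=
  stmt13_general a b π α hapos hbpos hπpos hπsum hπ1 hdb Jα hJα flux πm hflux hπm k' hk'
end

section
/- For the birth-death chain on ℤ₊ with a_i = b_i = i^γ for i ≥ 1 (a_0 = 0, b_0 = 1) and γ > 1, the reversible probability measure π satisfies π_i = Z^{-1} i^{-γ} for i ≥ 1, and the rescaled Cheeger constant k^{(1/2)'} = inf_{0<π(A)≤1/2} J^{(1/2)}(A×Aᶜ)/π(A) is strictly positive if and only if γ ≥ 2, where J^{(1/2)}(i,j) = π_i q_{ij}/√((a_i+b_i)∨(a_j+b_j)). -/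
open Set ENNReal

/-!
Detailed balance makes `π n * b n` constant, so `π i ∝ i ^ (-γ)`. The only edge leaving a tail
`[m, ∞)` has weight `≍ m ^ (-γ/2)`, while by the integral test the tail has mass `≍ m ^ (1 - γ)`;
so the Cheeger ratios of tails behave like `m ^ (γ/2 - 1)`, which tend to `0` exactly when
`γ < 2`. Conversely, every set of mass in `(0, 1/2]` has a boundary edge `{n, n + 1}` whose tail
`[n + 1, ∞)` carries at least its mass, so the Cheeger constant is bounded below by the tail ratios.
-/

namespace BirthDeath

open Filter Topology

noncomputable def setMass (π : ℕ → ℝ) (A : Set ℕ) : ℝ≥0∞ := ∑' i : A, ENNReal.ofReal (π i)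

noncomputable def boundaryFlux (J : ℕ → ℕ → ℝ) (A : Set ℕ) : ℝ≥0∞ :=
  ∑' i : A, ∑' j : ↥Aᶜ, ENNReal.ofReal (J i j)

noncomputable def cheegerConstant (π : ℕ → ℝ) (J : ℕ → ℕ → ℝ) : ℝ≥0∞ :=
  ⨅ A ∈ {A : Set ℕ | 0 < setMass π A ∧ setMass π A ≤ 1 / 2}, boundaryFlux J A / setMass π A

section SetFunctions

variable {π : ℕ → ℝ} {J : ℕ → ℕ → ℝ}

theorem setMass_mono : Monotone (setMass π) :=
  fun _ _ h ↦ ENNReal.tsum_mono_subtype (fun i ↦ ENNReal.ofReal (π i)) h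

theorem setMass_add_setMass_compl (A : Set ℕ) :
    setMass π A + setMass π Aᶜ = ∑' i, ENNReal.ofReal (π i) :=
  ENNReal.summable.tsum_add_tsum_compl (f := fun i ↦ ENNReal.ofReal (π i)) ENNReal.summable

theorem setMass_Ici (m : ℕ) :
    setMass π (Ici m) = ∑' k, ENNReal.ofReal (π (k + m)) := by
  have hrange : range (· + m) = Ici m := by
    ext k
    exact ⟨fun ⟨j, hj⟩ ↦ hj ▸ Nat.le_add_left m j, fun h ↦ ⟨k - m, Nat.sub_add_cancel h⟩⟩
  rw [setMass, ← hrange, tsum_range (fun i ↦ ENNReal.ofReal (π i)) (add_left_injective m)]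

theorem setMass_pos (hπ : ∀ i, 0 < π i) {A : Set ℕ} {i : ℕ} (hi : i ∈ A) :
    0 < setMass π A :=
  (ENNReal.ofReal_pos.2 (hπ i)).trans_le
    (ENNReal.le_tsum (f := fun k : A ↦ ENNReal.ofReal (π k)) ⟨i, hi⟩)

theorem ofReal_le_boundaryFlux {A : Set ℕ} {i j : ℕ} (hi : i ∈ A) (hj : j ∉ A) :
    ENNReal.ofReal (J i j) ≤ boundaryFlux J A :=
  (ENNReal.le_tsum (f := fun j : ↥Aᶜ ↦ ENNReal.ofReal (J i j)) ⟨j, hj⟩).trans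
    (ENNReal.le_tsum (f := fun i : A ↦ ∑' j : ↥Aᶜ, ENNReal.ofReal (J i j)) ⟨i, hi⟩)

theorem boundaryFlux_Ici_succ (hJ : ∀ i j, j ≠ i + 1 → i ≠ j + 1 → J i j = 0) (n : ℕ) :
    boundaryFlux J (Ici (n + 1)) = ENNReal.ofReal (J (n + 1) n) := by
  have hn : n ∉ Ici (n + 1) := by simp
  rw [boundaryFlux, tsum_eq_single ⟨n + 1, mem_Ici.2 le_rfl⟩, tsum_eq_single ⟨n, hn⟩]
  · rintro ⟨j, hj⟩ hjn
    simp only [mem_compl_iff, mem_Ici, not_le, ne_eq, Subtype.mk.injEq] at hj hjn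
    dsimp only
    rw [hJ _ _ (by omega) (by omega), ENNReal.ofReal_zero]
  · rintro ⟨i, hi⟩ hin
    simp only [mem_Ici, ne_eq, Subtype.mk.injEq] at hi hin
    refine ENNReal.tsum_eq_zero.2 fun ⟨j, hj⟩ ↦ ?_
    simp only [mem_compl_iff, mem_Ici, not_le] at hj
    dsimp only
    rw [hJ _ _ (by omega) (by omega), ENNReal.ofReal_zero]

theorem nonempty_of_setMass_pos {A : Set ℕ} (h : 0 < setMass π A) : A.Nonempty :=
  nonempty_iff_ne_empty.2 fun hA ↦ by simp [hA, setMass] at h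

theorem setMass_le_setMass_compl (hπ1 : ∑' i, ENNReal.ofReal (π i) = 1) {A : Set ℕ}
    (hA : setMass π A ≤ 1 / 2) : setMass π A ≤ setMass π Aᶜ := by
  have hfin : setMass π A ≠ ∞ := ne_top_of_le_ne_top (by simp) hA
  have hcompl : setMass π Aᶜ = 1 - setMass π A :=
    ENNReal.eq_sub_of_add_eq hfin (by rw [add_comm, setMass_add_setMass_compl, hπ1])
  calc setMass π A ≤ 1 - 1 / 2 := by rwa [one_div, ENNReal.one_sub_inv_two, ← one_div]
    _ ≤ setMass π Aᶜ := hcompl ▸ tsub_le_tsub_left hA 1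

theorem exists_notMem_succ_mem {S : Set ℕ} (hS : S.Nonempty) (h0 : 0 ∉ S) :
    ∃ n, n ∉ S ∧ n + 1 ∈ S ∧ S ⊆ Ici (n + 1) := by
  classical
  obtain ⟨n, hn⟩ : ∃ n, Nat.find hS = n + 1 :=
    Nat.exists_eq_add_one_of_ne_zero fun h ↦ h0 (h ▸ Nat.find_spec hS)
  exact ⟨n, Nat.find_min hS (hn ▸ n.lt_succ_self), hn ▸ Nat.find_spec hS,
    fun k hk ↦ hn ▸ Nat.find_min' hS hk⟩

theorem exists_edge_le_boundaryFlux (hπ1 : ∑' i, ENNReal.ofReal (π i) = 1) {A : Set ℕ}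
    (hpos : 0 < setMass π A) (hhalf : setMass π A ≤ 1 / 2) :
    ∃ n, (ENNReal.ofReal (J n (n + 1)) ≤ boundaryFlux J A ∨
      ENNReal.ofReal (J (n + 1) n) ≤ boundaryFlux J A) ∧
      setMass π A ≤ setMass π (Ici (n + 1)) := by
  have hcompl := setMass_le_setMass_compl hπ1 hhalf
  -- `n + 1` is the first point whose membership in `A` differs from that of `0`.
  by_cases h0 : 0 ∈ A
  · obtain ⟨n, hn, hn1, hsub⟩ :=
      exists_notMem_succ_mem (nonempty_of_setMass_pos (hpos.trans_le hcompl)) (not_not.2 h0)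
    exact ⟨n, Or.inl (ofReal_le_boundaryFlux (not_not.1 hn) hn1),
      hcompl.trans (setMass_mono hsub)⟩
  · obtain ⟨n, hn, hn1, hsub⟩ := exists_notMem_succ_mem (nonempty_of_setMass_pos hpos) h0
    exact ⟨n, Or.inr (ofReal_le_boundaryFlux hn1 hn), setMass_mono hsub⟩

theorem le_cheegerConstant (hπ1 : ∑' i, ENNReal.ofReal (π i) = 1) {c : ℝ≥0∞}
    (hup : ∀ n, c * setMass π (Ici (n + 1)) ≤ ENNReal.ofReal (J n (n + 1)))
    (hdown : ∀ n, c * setMass π (Ici (n + 1)) ≤ ENNReal.ofReal (J (n + 1) n)) :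
    c ≤ cheegerConstant π J := by
  refine le_iInf₂ fun A ⟨hpos, hhalf⟩ ↦ ?_
  rw [ENNReal.le_div_iff_mul_le (Or.inl hpos.ne') (Or.inl (ne_top_of_le_ne_top (by simp) hhalf))]
  obtain ⟨n, hflux, hmass⟩ := exists_edge_le_boundaryFlux (J := J) hπ1 hpos hhalf
  calc c * setMass π A ≤ c * setMass π (Ici (n + 1)) := by gcongr
    _ ≤ boundaryFlux J A := hflux.elim (hup n).trans (hdown n).trans

theorem cheegerConstant_eq_zero (hπ : ∀ i, 0 < π i) (hπ1 : ∑' i, ENNReal.ofReal (π i) = 1)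
    (hJ : ∀ i j, j ≠ i + 1 → i ≠ j + 1 → J i j = 0) {f : ℕ → ℝ≥0∞}
    (hf : Tendsto f atTop (𝓝 0))
    (hflux : ∀ n, ENNReal.ofReal (J (n + 1) n) ≤ f n * setMass π (Ici (n + 1))) :
    cheegerConstant π J = 0 := by
  have htail : Tendsto (fun n ↦ setMass π (Ici (n + 1))) atTop (𝓝 0) := by
    simp only [setMass_Ici]
    exact (ENNReal.tendsto_sum_nat_add _ (hπ1 ▸ one_ne_top)).comp (tendsto_add_atTop_nat 1)
  have hsmall : ∀ᶠ n in atTop, setMass π (Ici (n + 1)) ≤ 1 / 2 :=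
    htail.eventually (ge_mem_nhds (by norm_num))
  refine le_antisymm (ge_of_tendsto hf (hsmall.mono fun n hn ↦ ?_)) bot_le
  calc cheegerConstant π J ≤ boundaryFlux J (Ici (n + 1)) / setMass π (Ici (n + 1)) :=
        iInf₂_le _ ⟨setMass_pos hπ (mem_Ici.2 le_rfl), hn⟩
    _ ≤ f n := by
        rw [boundaryFlux_Ici_succ hJ]
        exact ENNReal.div_le_of_le_mul (hflux n)

end SetFunctions

section PowerTail

variable {γ : ℝ}

noncomputable def powTail (γ : ℝ) (m : ℕ) : ℝ := ∑' k : ℕ, ((k + m : ℕ) : ℝ) ^ (-γ)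

theorem summable_powTail (hγ : 1 < γ) (m : ℕ) :
    Summable fun k : ℕ ↦ ((k + m : ℕ) : ℝ) ^ (-γ) :=
  (summable_nat_add_iff m).2 (Real.summable_nat_rpow.2 (by linarith))

theorem integral_Ioi_rpow_neg (hγ : 1 < γ) {c : ℝ} (hc : 0 < c) :
    ∫ x in Ioi c, x ^ (-γ) = c ^ (1 - γ) / (γ - 1) := by
  rw [integral_Ioi_rpow_of_lt (by linarith) hc, show -γ + 1 = 1 - γ by ring, neg_div,
    ← div_neg, neg_sub]

theorem antitoneOn_rpow_neg_Ici (hγ : 0 ≤ γ) {c : ℝ} (hc : 0 < c) :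
    AntitoneOn (fun x : ℝ ↦ x ^ (-γ)) (Ici c) :=
  (Real.antitoneOn_rpow_Ioi_of_exponent_nonpos (by linarith)).mono fun _ hx ↦ hc.trans_le hx

theorem div_le_powTail (hγ : 1 < γ) {m : ℕ} (hm : 0 < m) :
    (m : ℝ) ^ (1 - γ) / (γ - 1) ≤ powTail γ m := by
  have hm' : (0 : ℝ) < m := by exact_mod_cast hm
  rw [← integral_Ioi_rpow_neg hγ hm']
  exact AntitoneOn.integral_le_tsum_comp_add m (antitoneOn_rpow_neg_Ici (by linarith) hm')
    (Real.summable_nat_rpow.2 (by linarith)) fun t ht ↦ Real.rpow_nonneg (hm'.trans ht).le _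

theorem powTail_le (hγ : 1 < γ) {m : ℕ} (hm : 0 < m) :
    powTail γ m ≤ γ / (γ - 1) * (m : ℝ) ^ (1 - γ) := by
  have hm' : (0 : ℝ) < m := by exact_mod_cast hm
  have hrest : ∑' k : ℕ, ((k + 1 + m : ℕ) : ℝ) ^ (-γ) ≤ (m : ℝ) ^ (1 - γ) / (γ - 1) := by
    rw [← integral_Ioi_rpow_neg hγ hm']
    simpa only [add_right_comm] using AntitoneOn.tsum_comp_add_le_integral m
      (antitoneOn_rpow_neg_Ici (by linarith) hm') (integrableOn_Ioi_rpow_of_lt (by linarith) hm')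
      fun t ht ↦ Real.rpow_nonneg (hm'.trans ht).le _
  have hfirst : (m : ℝ) ^ (-γ) ≤ (m : ℝ) ^ (1 - γ) :=
    Real.rpow_le_rpow_of_exponent_le (by exact_mod_cast hm) (by linarith)
  rw [powTail, (summable_powTail hγ m).tsum_eq_zero_add, zero_add]
  calc _ ≤ (m : ℝ) ^ (1 - γ) + (m : ℝ) ^ (1 - γ) / (γ - 1) := add_le_add hfirst hrest
    _ = γ / (γ - 1) * (m : ℝ) ^ (1 - γ) := by
        field_simp [show γ - 1 ≠ 0 by linarith]
        ring

end PowerTail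

section Chain

variable {γ : ℝ} {a b π : ℕ → ℝ} {J : ℕ → ℕ → ℝ}

theorem mul_eq_mul_zero_of_detailedBalance (hab : ∀ n, a (n + 1) = b (n + 1))
    (hdb : ∀ n, π n * b n = π (n + 1) * a (n + 1)) (n : ℕ) : π n * b n = π 0 * b 0 := by
  induction n with
  | zero => rfl
  | succ n ih => rw [← hab, ← hdb, ih]

theorem apply_eq_mul_rpow_neg (hb : ∀ i, b i = if i = 0 then 1 else (i : ℝ) ^ γ)
    (hflow : ∀ n, π n * b n = π 0) {i : ℕ} (hi : i ≠ 0) : π i = π 0 * (i : ℝ) ^ (-γ) := by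
  have hpos : (0 : ℝ) < (i : ℝ) ^ γ := Real.rpow_pos_of_pos (by positivity) γ
  rw [Real.rpow_neg (Nat.cast_nonneg i), ← hflow i, hb, if_neg hi, mul_inv_cancel_right₀ hpos.ne']

theorem setMass_Ici_eq_powTail (hγ : 1 < γ) (hπ0 : 0 ≤ π 0)
    (hπ : ∀ i, i ≠ 0 → π i = π 0 * (i : ℝ) ^ (-γ)) {m : ℕ} (hm : 0 < m) :
    setMass π (Ici m) = ENNReal.ofReal (π 0 * powTail γ m) := by
  rw [setMass_Ici, powTail, ← tsum_mul_left, ENNReal.ofReal_tsum_of_nonneg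
    (fun k ↦ mul_nonneg hπ0 (Real.rpow_nonneg (Nat.cast_nonneg _) _))
    ((summable_powTail hγ m).mul_left _)]
  exact tsum_congr fun k ↦ by rw [hπ (k + m) (by omega)]

theorem edgeWeight_succ_eq (hγ : 0 ≤ γ) (ha : ∀ i, a i = if i = 0 then 0 else (i : ℝ) ^ γ)
    (hb : ∀ i, b i = if i = 0 then 1 else (i : ℝ) ^ γ) (hflow : ∀ n, π n * b n = π 0)
    (hdb : ∀ i, π i * b i = π (i + 1) * a (i + 1))
    (hJ : ∀ i j, J i j =
      if j = i + 1 then π i * b i / Real.sqrt (max (a i + b i) (a j + b j))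
      else if i = j + 1 then π i * a i / Real.sqrt (max (a i + b i) (a j + b j))
      else 0) (n : ℕ) :
    J n (n + 1) = π 0 / Real.sqrt (2 * ((n + 1 : ℕ) : ℝ) ^ γ) ∧
      J (n + 1) n = π 0 / Real.sqrt (2 * ((n + 1 : ℕ) : ℝ) ^ γ) := by
  have hmax : max (a n + b n) (a (n + 1) + b (n + 1)) = 2 * ((n + 1 : ℕ) : ℝ) ^ γ := by
    rw [max_eq_right, ha, hb, if_neg n.succ_ne_zero, if_neg n.succ_ne_zero, two_mul]
    rw [ha, hb, ha, hb, if_neg n.succ_ne_zero, if_neg n.succ_ne_zero]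
    split_ifs with h
    · subst h
      norm_num
    · have : (n : ℝ) ^ γ ≤ ((n + 1 : ℕ) : ℝ) ^ γ := by gcongr; omega
      linarith
  constructor
  · rw [hJ, if_pos rfl, hflow, hmax]
  · rw [hJ, if_neg (by omega), if_pos rfl, ← hdb, hflow, max_comm, hmax]

theorem sqrt_two_mul_rpow {x : ℝ} (hx : 0 ≤ x) (γ : ℝ) :
    Real.sqrt (2 * x ^ γ) = Real.sqrt 2 * x ^ (γ / 2) := by
  rw [Real.sqrt_mul zero_le_two, Real.sqrt_eq_rpow (x ^ γ), ← Real.rpow_mul hx, mul_one_div]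

theorem mul_powTail_le_div_sqrt (hγ : 2 ≤ γ) {p : ℝ} (hp : 0 ≤ p) {m : ℕ} (hm : 0 < m) :
    (γ - 1) / (γ * Real.sqrt 2) * (p * powTail γ m) ≤ p / Real.sqrt (2 * (m : ℝ) ^ γ) := by
  have hm' : (1 : ℝ) ≤ m := by exact_mod_cast hm
  have hγ1 : 0 < γ - 1 := by linarith
  have hexp : (m : ℝ) ^ (1 - γ) ≤ ((m : ℝ) ^ (γ / 2))⁻¹ := by
    rw [← Real.rpow_neg (by positivity)]
    exact Real.rpow_le_rpow_of_exponent_le hm' (by linarith)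
  calc (γ - 1) / (γ * Real.sqrt 2) * (p * powTail γ m)
      ≤ (γ - 1) / (γ * Real.sqrt 2) * (p * (γ / (γ - 1) * (m : ℝ) ^ (1 - γ))) := by
        gcongr
        exact powTail_le (by linarith) hm
    _ = p / Real.sqrt 2 * (m : ℝ) ^ (1 - γ) := by
        field_simp
    _ ≤ p / Real.sqrt 2 * ((m : ℝ) ^ (γ / 2))⁻¹ := by gcongr
    _ = p / Real.sqrt (2 * (m : ℝ) ^ γ) := by
        rw [sqrt_two_mul_rpow (Nat.cast_nonneg m)]
        ring

theorem div_sqrt_le_mul_powTail (hγ : 1 < γ) {p : ℝ} (hp : 0 ≤ p) {m : ℕ} (hm : 0 < m) :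
    p / Real.sqrt (2 * (m : ℝ) ^ γ) ≤
      (γ - 1) / Real.sqrt 2 * (m : ℝ) ^ (γ / 2 - 1) * (p * powTail γ m) := by
  have hm' : (0 : ℝ) < m := by exact_mod_cast hm
  have hγ1 : 0 < γ - 1 := by linarith
  have hexp : (m : ℝ) ^ (γ / 2 - 1) * (m : ℝ) ^ (1 - γ) = ((m : ℝ) ^ (γ / 2))⁻¹ := by
    rw [← Real.rpow_add hm', ← Real.rpow_neg hm'.le]
    ring_nf
  calc p / Real.sqrt (2 * (m : ℝ) ^ γ)
      = (γ - 1) / Real.sqrt 2 * (m : ℝ) ^ (γ / 2 - 1) * (p * ((m : ℝ) ^ (1 - γ) / (γ - 1))) := by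
        rw [sqrt_two_mul_rpow hm'.le, div_mul_eq_div_div, div_eq_mul_inv _ (_ ^ _), ← hexp]
        field_simp
    _ ≤ _ := by
        gcongr
        exact div_le_powTail hγ hm

theorem tendsto_natCast_succ_rpow_of_neg {s : ℝ} (hs : s < 0) :
    Tendsto (fun n : ℕ ↦ ((n + 1 : ℕ) : ℝ) ^ s) atTop (𝓝 0) := by
  have h := (tendsto_rpow_neg_atTop (neg_pos.2 hs)).comp
    (tendsto_natCast_atTop_atTop.comp (tendsto_add_atTop_nat 1))
  rw [neg_neg] at h
  exact h

end Chain

end BirthDeath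

open BirthDeath

/-- Example 4.5 (criterion part): for the birth-death chain with
`a_i = b_i = i^γ` (`i ≥ 1`), `a_0 = 0`, `b_0 = 1` and `γ > 1`, the reversible
probability measure satisfies `π_i = Z⁻¹ i^{−γ}` for `i ≥ 1`, and the rescaled
Cheeger constant `k^{(1/2)'}` is positive if and only if `γ ≥ 2`. -/
theorem stmt14 (γ : ℝ) (hγ : 1 < γ)
    (a b : ℕ → ℝ)
    (ha : ∀ i, a i = if i = 0 then 0 else (i : ℝ) ^ γ)
    (hb : ∀ i, b i = if i = 0 then 1 else (i : ℝ) ^ γ)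
    (π : ℕ → ℝ)
    (hπpos : ∀ i, 0 < π i) (hπsum : Summable π) (hπ1 : (∑' i, π i) = 1)
    (hdb : ∀ i, π i * b i = π (i + 1) * a (i + 1))
    (J : ℕ → ℕ → ℝ)
    (hJ : ∀ i j, J i j =
      if j = i + 1 then π i * b i / Real.sqrt (max (a i + b i) (a j + b j))
      else if i = j + 1 then π i * a i / Real.sqrt (max (a i + b i) (a j + b j))
      else 0)
    (flux πm : Set ℕ → ℝ≥0∞)
    (hflux : ∀ A, flux A = ∑' i : A, ∑' j : ↥Aᶜ, ENNReal.ofReal (J i j))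
    (hπm : ∀ A : Set ℕ, πm A = ∑' i : A, ENNReal.ofReal (π i))
    (k' : ℝ≥0∞)
    (hk' : k' = ⨅ A ∈ {A : Set ℕ | 0 < πm A ∧ πm A ≤ 1 / 2}, flux A / πm A) :
    (∃ Z : ℝ, 0 < Z ∧ ∀ i, 1 ≤ i → π i = (i : ℝ) ^ (-γ) / Z) ∧
    (0 < k' ↔ 2 ≤ γ) := by
  obtain rfl : flux = boundaryFlux J := funext hflux
  obtain rfl : πm = setMass π := funext hπm
  obtain rfl : k' = cheegerConstant π J := hk'
  have hflow (n : ℕ) : π n * b n = π 0 := by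
    rw [mul_eq_mul_zero_of_detailedBalance (fun n ↦ by rw [ha, hb, if_neg n.succ_ne_zero,
      if_neg n.succ_ne_zero]) hdb, hb, if_pos rfl, mul_one]
  have hπ (i : ℕ) (hi : i ≠ 0) := apply_eq_mul_rpow_neg hb hflow hi
  have hmass (n : ℕ) := setMass_Ici_eq_powTail hγ (hπpos 0).le hπ (m := n + 1) (by omega)
  obtain ⟨hup, hdown⟩ := forall_and.1 (edgeWeight_succ_eq (by linarith) ha hb hflow hdb hJ)
  have hπ1' : ∑' i, ENNReal.ofReal (π i) = 1 := by
    rw [← ENNReal.ofReal_tsum_of_nonneg (fun i ↦ (hπpos i).le) hπsum, hπ1, ENNReal.ofReal_one]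
  refine ⟨⟨(π 0)⁻¹, inv_pos.2 (hπpos 0), fun i hi ↦ by rw [hπ i (by omega), div_inv_eq_mul,
    mul_comm]⟩, fun hpos ↦ ?_, fun hγ2 ↦ ?_⟩
  · by_contra hlt
    refine hpos.ne' (cheegerConstant_eq_zero hπpos hπ1'
      (fun i j h₁ h₂ ↦ by rw [hJ, if_neg h₁, if_neg h₂])
      (f := fun n ↦ ENNReal.ofReal ((γ - 1) / Real.sqrt 2 * ((n + 1 : ℕ) : ℝ) ^ (γ / 2 - 1)))
      ?_ fun n ↦ ?_)
    · simpa using ENNReal.tendsto_ofReal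
        ((tendsto_natCast_succ_rpow_of_neg (by linarith)).const_mul ((γ - 1) / Real.sqrt 2))
    · rw [hdown, hmass, ← ENNReal.ofReal_mul (by positivity)]
      exact ENNReal.ofReal_le_ofReal (div_sqrt_le_mul_powTail hγ (hπpos 0).le (by omega))
  · have hbound (n : ℕ) : ENNReal.ofReal ((γ - 1) / (γ * Real.sqrt 2)) * setMass π (Ici (n + 1)) ≤
        ENNReal.ofReal (π 0 / Real.sqrt (2 * ((n + 1 : ℕ) : ℝ) ^ γ)) := by
      rw [hmass, ← ENNReal.ofReal_mul (by positivity)]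
      exact ENNReal.ofReal_le_ofReal (mul_powTail_le_div_sqrt hγ2 (hπpos 0).le (by omega))
    exact (ENNReal.ofReal_pos.2 (by positivity)).trans_le
      (le_cheegerConstant hπ1' (fun n ↦ hup n ▸ hbound n) fun n ↦ hdown n ▸ hbound n)
end
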